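/- arXiv:1711.10649 — 7 statements merged into one kernel-verified Lean document; each statement's English description precedes it below -/
import Mathlib

section
/- Let X_1, X_2, … be an i.i.d. sequence of real random variables under the sublinear expectation 𝔼, with μ̄ := 𝔼[X_1] and μ_ := −𝔼[−X_1] both finite, and σ̄² := sup_{θ∈Θ} E_θ[(X_1 − E_θ[X_1])²] < ∞. Then for every n ≥ 1, writing X̄_n := (X_1 + ⋯ + X_n)/n, one has 𝔼[((X̄_n − μ̄)⁺)² + ((X̄_n − μ_)⁻)²] ≤ 2(σ̄² + (μ̄ − μ_)²)/n, where a⁺ := max(a,0) and a⁻ := max(−a,0). -/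
open MeasureTheory

/-- The sublinear expectation `𝔼[f] = sup_θ E_θ[f]` associated with a family of measures. -/
noncomputable def SE {Ω Θ : Type*} [MeasurableSpace Ω] (P : Θ → Measure Ω) (f : Ω → ℝ) : ℝ :=
  ⨆ θ, ∫ ω, f ω ∂(P θ)

/-- `X` and `Y` are identically distributed under the sublinear expectation: the sublinear
expectations of `φ (X ·)` and `φ (Y ·)` agree for every bounded continuous `φ`. -/
def SEIdentDistrib {Ω Θ : Type*} [MeasurableSpace Ω] (P : Θ → Measure Ω) (X Y : Ω → ℝ) : Prop :=
  ∀ φ : ℝ → ℝ, Continuous φ → (∃ C, ∀ x, |φ x| ≤ C) →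
    SE P (fun ω => φ (X ω)) = SE P (fun ω => φ (Y ω))

/-- `Y` is independent of the random vector `X` under the sublinear expectation:
`𝔼[φ(X,Y)] = 𝔼[ x ↦ 𝔼[φ(x,Y)] ∘ X ]` for every bounded continuous `φ`. -/
def SEIndepOf {Ω Θ : Type*} [MeasurableSpace Ω] (P : Θ → Measure Ω) {m : ℕ}
    (Y : Ω → ℝ) (X : Ω → Fin m → ℝ) : Prop :=
  ∀ φ : (Fin m → ℝ) → ℝ → ℝ,
    Continuous (fun p : (Fin m → ℝ) × ℝ => φ p.1 p.2) →
    (∃ C, ∀ x y, |φ x y| ≤ C) →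
    SE P (fun ω => φ (X ω) (Y ω)) = SE P (fun ω => SE P (fun ω' => φ (X ω) (Y ω')))

/-- `X 0, X 1, …` is i.i.d. under the sublinear expectation: each `X (i+1)` is identically
distributed as `X 0` and independent of `(X 0, …, X i)`. -/
def SEiid {Ω Θ : Type*} [MeasurableSpace Ω] (P : Θ → Measure Ω) (X : ℕ → Ω → ℝ) : Prop :=
  ∀ i : ℕ, SEIdentDistrib P (X (i + 1)) (X 0) ∧
    SEIndepOf P (X (i + 1)) (fun ω (j : Fin (i + 1)) => X (j : ℕ) ω)


/-!
Write `S_k = X_0 + ⋯ + X_{k-1} - k μ̄` and `C = σ̄² + (μ̄ - μ_)²`. Under every `P_θ`,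
`((S_k + (X_k - μ̄))⁺)² ≤ (S_k⁺)² + 2 S_k⁺ (X_k - μ̄) + (X_k - μ̄)²`. Since `X_k` is distributed
as `X_0`, the last term has `E_θ`-mean at most `C`; since `X_k` is moreover independent of `S_k`
and has upper mean `μ̄`, the cross term has nonpositive `E_θ`-mean. Identical distribution and
independence only speak about bounded continuous test functions; truncation and dominated
convergence extend both facts to the unbounded functions needed here. Induction gives
`E_θ[(S_n⁺)²] ≤ n C`; the negative part is the same bound for the sequence `-X_i`, whose upper
mean is `-μ_`.
-/

open Filter Topology

def clip (M x : ℝ) : ℝ := max (-M) (min x M)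

namespace clip

@[fun_prop]
lemma continuous (M : ℝ) : Continuous (clip M) := by
  unfold clip; fun_prop

lemma abs_le_abs {M : ℝ} (hM : 0 ≤ M) (x : ℝ) : |clip M x| ≤ |x| := by
  unfold clip; rw [_root_.abs_le]; constructor <;>
    cases abs_cases x <;> cases max_cases (-M) (min x M) <;> cases min_cases x M <;> linarith

lemma abs_le {M : ℝ} (hM : 0 ≤ M) (x : ℝ) : |clip M x| ≤ M := by
  unfold clip; rw [_root_.abs_le]; constructor <;>
    cases max_cases (-M) (min x M) <;> cases min_cases x M <;> linarith

lemma nonneg {x : ℝ} (hx : 0 ≤ x) {M : ℝ} (hM : 0 ≤ M) : 0 ≤ clip M x :=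
  le_max_of_le_right (le_min hx hM)

lemma le_self {x : ℝ} (hx : 0 ≤ x) {M : ℝ} (hM : 0 ≤ M) : clip M x ≤ x := by
  unfold clip; cases max_cases (-M) (min x M) <;> cases min_cases x M <;> linarith

lemma eq_self {M x : ℝ} (hx : |x| ≤ M) : clip M x = x := by
  unfold clip; obtain ⟨h₁, h₂⟩ := _root_.abs_le.1 hx
  rw [min_eq_left h₂, max_eq_right h₁]

lemma le_add_sq_div {M : ℝ} (hM : 0 < M) (x : ℝ) : clip M x ≤ x + x ^ 2 / M := by
  have hsq : 0 ≤ x ^ 2 / M := by positivity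
  rcases le_or_gt (-M) x with hx | hx
  · exact (max_le (by linarith) (min_le_left x M)).trans (by linarith)
  · have : -M - x ≤ x ^ 2 / M := by rw [le_div_iff₀ hM]; nlinarith
    rw [clip, max_eq_left (by linarith [min_le_left x M])]; linarith

lemma tendsto {ι : Type*} {l : Filter ι} {a : ι → ℝ} (ha : Tendsto a l atTop) (x : ℝ) :
    Tendsto (fun i => clip (a i) x) l (𝓝 x) :=
  tendsto_const_nhds.congr' <| (ha.eventually_ge_atTop |x|).mono fun _ h => (eq_self h).symm

end clip

section Integral

variable {Ω : Type*} [MeasurableSpace Ω] {μ : Measure Ω}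

lemma integral_le_of_forall_le [IsProbabilityMeasure μ] {f : Ω → ℝ} {c : ℝ} (hc : 0 ≤ c)
    (hf : ∀ ω, f ω ≤ c) : ∫ ω, f ω ∂μ ≤ c := by
  by_cases hint : Integrable f μ
  · simpa using integral_mono hint (integrable_const c) hf
  · rw [integral_undef hint]; exact hc

lemma MeasureTheory.Integrable.clip {f : Ω → ℝ} (hf : Integrable f μ) {M : ℝ} (hM : 0 ≤ M) :
    Integrable (fun ω => clip M (f ω)) μ :=
  hf.mono ((clip.continuous M).comp_aestronglyMeasurable hf.1) <|
    .of_forall fun ω => by simpa only [Real.norm_eq_abs] using clip.abs_le_abs hM (f ω)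

lemma tendsto_integral_clip {f : Ω → ℝ} (hf : Integrable f μ) :
    Tendsto (fun M : ℕ => ∫ ω, clip M (f ω) ∂μ) atTop (𝓝 (∫ ω, f ω ∂μ)) :=
  tendsto_integral_of_dominated_convergence (fun ω => |f ω|)
    (fun M => (hf.clip M.cast_nonneg).1) hf.abs
    (fun M => .of_forall fun ω => clip.abs_le_abs M.cast_nonneg (f ω))
    (.of_forall fun ω => clip.tendsto tendsto_natCast_atTop_atTop (f ω))

lemma tendsto_integral_clip_mul_clip {f g : Ω → ℝ} (hf : AEStronglyMeasurable f μ)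
    (hg : AEStronglyMeasurable g μ) (hfg : Integrable (fun ω => f ω * g ω) μ) :
    Tendsto (fun M : ℕ => ∫ ω, clip M (f ω) * clip (M ^ 2) (g ω) ∂μ) atTop
      (𝓝 (∫ ω, f ω * g ω ∂μ)) := by
  refine tendsto_integral_of_dominated_convergence (fun ω => |f ω * g ω|)
    (fun M => ((clip.continuous _).comp_aestronglyMeasurable hf).mul
      ((clip.continuous _).comp_aestronglyMeasurable hg)) hfg.abs
    (fun M => .of_forall fun ω => ?_) (.of_forall fun ω => ?_)
  · rw [Real.norm_eq_abs, abs_mul, abs_mul]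
    exact mul_le_mul (clip.abs_le_abs M.cast_nonneg _) (clip.abs_le_abs (by positivity) _)
      (abs_nonneg _) (abs_nonneg _)
  · exact (clip.tendsto tendsto_natCast_atTop_atTop (f ω)).mul
      (clip.tendsto ((tendsto_pow_atTop two_ne_zero).comp tendsto_natCast_atTop_atTop) (g ω))

end Integral

section SublinearExpectation

variable {Ω Θ : Type*} [MeasurableSpace Ω] {P : Θ → Measure Ω}

lemma SE_le [Nonempty Θ] {f : Ω → ℝ} {c : ℝ} (h : ∀ θ, ∫ ω, f ω ∂(P θ) ≤ c) : SE P f ≤ c :=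
  ciSup_le h

lemma integral_le_SE_of_abs_le (hP : ∀ θ, IsProbabilityMeasure (P θ)) {f : Ω → ℝ} {B : ℝ}
    (hf : ∀ ω, |f ω| ≤ B) (θ : Θ) : ∫ ω, f ω ∂(P θ) ≤ SE P f := by
  refine le_ciSup (f := fun θ => ∫ ω, f ω ∂(P θ)) ⟨B, Set.forall_mem_range.2 fun θ' => ?_⟩ θ
  have := norm_integral_le_of_norm_le_const (μ := P θ') (f := f)
    (.of_forall fun ω => by rw [Real.norm_eq_abs]; exact hf ω)
  simp only [probReal_univ, mul_one, Real.norm_eq_abs] at this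
  exact (le_abs_self _).trans this

lemma SEIdentDistrib.integral_le_SE (hP : ∀ θ, IsProbabilityMeasure (P θ)) {Y Z : Ω → ℝ}
    (hid : SEIdentDistrib P Y Z) {φ : ℝ → ℝ} (hφ : Continuous φ) {B : ℝ} (hB : ∀ x, |φ x| ≤ B)
    (θ : Θ) : ∫ ω, φ (Y ω) ∂(P θ) ≤ SE P (fun ω => φ (Z ω)) :=
  (integral_le_SE_of_abs_le hP (fun ω => hB (Y ω)) θ).trans_eq (hid φ hφ ⟨B, hB⟩)

lemma SEIdentDistrib.integral_comp_le [Nonempty Θ] (hP : ∀ θ, IsProbabilityMeasure (P θ))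
    {Y Z : Ω → ℝ} (hid : SEIdentDistrib P Y Z) {g : ℝ → ℝ} (hg : Continuous g)
    (hg0 : ∀ x, 0 ≤ g x) {c : ℝ} (hZ : ∀ θ, Integrable (fun ω => g (Z ω)) (P θ))
    (hc : ∀ θ, ∫ ω, g (Z ω) ∂(P θ) ≤ c) {θ : Θ} (hY : Integrable (fun ω => g (Y ω)) (P θ)) :
    ∫ ω, g (Y ω) ∂(P θ) ≤ c := by
  refine le_of_tendsto (tendsto_integral_clip hY) (.of_forall fun M => ?_)
  calc ∫ ω, clip M (g (Y ω)) ∂(P θ)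
      ≤ SE P (fun ω => clip M (g (Z ω))) :=
        hid.integral_le_SE hP (φ := fun x => clip M (g x)) (by fun_prop)
          (fun x => clip.abs_le M.cast_nonneg _) θ
    _ ≤ c := SE_le fun θ' => (integral_mono ((hZ θ').clip M.cast_nonneg) (hZ θ')
        fun ω => clip.le_self (hg0 _) M.cast_nonneg).trans (hc θ')

lemma SEIndepOf.integral_mul_le [Nonempty Θ] (hP : ∀ θ, IsProbabilityMeasure (P θ)) {m : ℕ}
    {Y : Ω → ℝ} {X : Ω → Fin m → ℝ} (hind : SEIndepOf P Y X) {u : (Fin m → ℝ) → ℝ}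
    {v : ℝ → ℝ} (hu : Continuous u) (hv : Continuous v) {A B b : ℝ} (hu0 : ∀ x, 0 ≤ u x)
    (huA : ∀ x, u x ≤ A) (hvB : ∀ z, |v z| ≤ B) (hb : 0 ≤ b)
    (hvb : ∀ θ, ∫ ω, v (Y ω) ∂(P θ) ≤ b) (θ : Θ) :
    ∫ ω, u (X ω) * v (Y ω) ∂(P θ) ≤ A * b := by
  have hA : 0 ≤ A := (hu0 0).trans (huA 0)
  have hφ : ∀ x z, |u x * v z| ≤ A * B := fun x z => by
    rw [abs_mul, abs_of_nonneg (hu0 x)]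
    exact mul_le_mul (huA x) (hvB z) (abs_nonneg _) hA
  calc ∫ ω, u (X ω) * v (Y ω) ∂(P θ)
      ≤ SE P (fun ω => u (X ω) * v (Y ω)) := integral_le_SE_of_abs_le hP (fun ω => hφ _ _) θ
    _ = SE P (fun ω => SE P (fun ω' => u (X ω) * v (Y ω'))) :=
        hind (fun x z => u x * v z) (by fun_prop) ⟨_, hφ⟩
    _ ≤ A * b := SE_le fun θ' =>
        have := hP θ'
        integral_le_of_forall_le (by positivity) fun ω => SE_le fun θ'' => by
          rw [integral_const_mul]
          exact (mul_le_mul_of_nonneg_left (hvb θ'') (hu0 _)).trans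
            (mul_le_mul_of_nonneg_right (huA _) hb)

lemma SEiid.identDistrib {X : ℕ → Ω → ℝ} (hiid : SEiid P X) :
    ∀ k, SEIdentDistrib P (X k) (X 0)
  | 0 => fun _ _ _ => rfl
  | k + 1 => (hiid k).1

lemma SEiid.neg {X : ℕ → Ω → ℝ} (hiid : SEiid P X) : SEiid P (fun i ω => -X i ω) := by
  refine fun i => ⟨fun φ hφ ⟨B, hB⟩ => ?_, fun φ hφ ⟨B, hB⟩ => ?_⟩
  · exact (hiid i).1 (fun x => φ (-x)) (by fun_prop) ⟨B, fun x => hB (-x)⟩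
  · exact (hiid i).2 (fun x z => φ (-x) (-z)) (by fun_prop) ⟨B, fun x z => hB _ _⟩

end SublinearExpectation

lemma sq_max_add_le (a b : ℝ) : max (a + b) 0 ^ 2 ≤ max a 0 ^ 2 + 2 * (max a 0 * b) + b ^ 2 := by
  rcases le_total (a + b) 0 with h | h
  · rw [max_eq_right h]
    nlinarith [le_max_left a 0, le_max_right a 0, sq_nonneg (max a 0 + b)]
  · rw [max_eq_left h]
    nlinarith [le_max_left a 0, le_max_right a 0]

section Moments

variable {Ω : Type*} [MeasurableSpace Ω] {μ : Measure Ω}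

lemma MeasureTheory.MemLp.max_zero {p : ENNReal} {f : Ω → ℝ} (hf : MemLp f p μ) :
    MemLp (fun ω => max (f ω) 0) p μ :=
  hf.mono ((continuous_id.max continuous_const).comp_aestronglyMeasurable hf.1) <|
    .of_forall fun ω => by
      rw [Real.norm_eq_abs, Real.norm_eq_abs, abs_of_nonneg (le_max_right _ _)]
      exact max_le (le_abs_self _) (abs_nonneg _)

lemma integrable_sq_max_sum_div_sub [IsFiniteMeasure μ] {Y : ℕ → Ω → ℝ}
    (hY : ∀ i, MemLp (Y i) 2 μ) (n : ℕ) (c : ℝ) :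
    Integrable (fun ω => max ((∑ i ∈ Finset.range n, Y i ω) / n - c) 0 ^ 2) μ :=
  (((memLp_finsetSum _ fun i _ => hY i).mul_const (n : ℝ)⁻¹).sub
    (memLp_const c)).max_zero.integrable_sq

variable [IsProbabilityMeasure μ] {f : Ω → ℝ}

lemma integral_sq_sub_eq (hf : MemLp f 2 μ) (c : ℝ) :
    ∫ ω, (f ω - c) ^ 2 ∂μ = ∫ ω, (f ω - ∫ ω', f ω' ∂μ) ^ 2 ∂μ + (∫ ω, f ω ∂μ - c) ^ 2 := by
  set E := ∫ ω, f ω ∂μ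
  have hfE : MemLp (fun ω => f ω - E) 2 μ := hf.sub (memLp_const E)
  have hsplit : ∀ ω, (f ω - c) ^ 2 = (f ω - E) ^ 2 + 2 * (E - c) * (f ω - E) + (E - c) ^ 2 :=
    fun ω => by ring
  have hlin : Integrable (fun ω => 2 * (E - c) * (f ω - E)) μ :=
    (hfE.integrable one_le_two).const_mul _
  have hquad : Integrable (fun ω => (f ω - E) ^ 2 + 2 * (E - c) * (f ω - E)) μ :=
    hfE.integrable_sq.add hlin
  simp_rw [hsplit]
  rw [integral_add hquad (integrable_const _), integral_add hfE.integrable_sq hlin,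
    integral_const_mul, integral_sub (hf.integrable one_le_two) (integrable_const E)]
  simp [E]

lemma integral_sq_sub_le_of_mem_Icc (hf : MemLp f 2 μ) {a b c s : ℝ}
    (hE : ∫ ω, f ω ∂μ ∈ Set.Icc a b) (hc : c ∈ Set.Icc a b)
    (hs : ∫ ω, (f ω - ∫ ω', f ω' ∂μ) ^ 2 ∂μ ≤ s) :
    ∫ ω, (f ω - c) ^ 2 ∂μ ≤ s + (b - a) ^ 2 := by
  rw [integral_sq_sub_eq hf c]
  obtain ⟨hE₁, hE₂⟩ := hE
  obtain ⟨hc₁, hc₂⟩ := hc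
  nlinarith [mul_nonneg (by linarith : 0 ≤ b - a - (∫ ω, f ω ∂μ - c))
    (by linarith : 0 ≤ b - a + (∫ ω, f ω ∂μ - c))]

lemma integral_clip_sub_le (hf : MemLp f 2 μ) {m C N : ℝ} (hN : 0 < N)
    (hm : ∫ ω, f ω ∂μ ≤ m) (hC : ∫ ω, (f ω - m) ^ 2 ∂μ ≤ C) :
    ∫ ω, clip N (f ω - m) ∂μ ≤ C / N := by
  have hfm : MemLp (fun ω => f ω - m) 2 μ := hf.sub (memLp_const m)
  have hfm₁ : Integrable (fun ω => f ω - m) μ := hfm.integrable one_le_two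
  calc ∫ ω, clip N (f ω - m) ∂μ ≤ ∫ ω, ((f ω - m) + (f ω - m) ^ 2 / N) ∂μ :=
        integral_mono (hfm₁.clip hN.le) (hfm₁.add (hfm.integrable_sq.div_const N))
          fun ω => clip.le_add_sq_div hN _
    _ = (∫ ω, f ω ∂μ - m) + (∫ ω, (f ω - m) ^ 2 ∂μ) / N := by
        rw [integral_add hfm₁ (hfm.integrable_sq.div_const N), integral_div,
          integral_sub (hf.integrable one_le_two) (integrable_const m)]
        simp
    _ ≤ C / N := by
        have := div_le_div_of_nonneg_right hC hN.le
        linarith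

end Moments

section IID

variable {Ω Θ : Type*} [MeasurableSpace Ω] [Nonempty Θ] {P : Θ → Measure Ω}
  {X : ℕ → Ω → ℝ} {m C : ℝ}

lemma SEiid.integral_sq_sub_le (hP : ∀ θ, IsProbabilityMeasure (P θ)) (hiid : SEiid P X)
    (hX : ∀ θ i, MemLp (X i) 2 (P θ)) (hC : ∀ θ, ∫ ω, (X 0 ω - m) ^ 2 ∂(P θ) ≤ C)
    (k : ℕ) (θ : Θ) : ∫ ω, (X k ω - m) ^ 2 ∂(P θ) ≤ C :=
  (hiid.identDistrib k).integral_comp_le hP (g := fun x => (x - m) ^ 2) (by fun_prop)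
    (fun _ => sq_nonneg _) (fun θ' => ((hX θ' 0).sub (memLp_const m)).integrable_sq) hC
    ((hX θ k).sub (memLp_const m)).integrable_sq

/-- Truncate the partial sum at level `M` and `X k - m` at level `M ^ 2`: independence bounds the
mean of the truncated product by `M * (C / M ^ 2)`, which vanishes as `M → ∞`. -/
lemma SEiid.integral_max_sum_sub_mul_le_zero (hP : ∀ θ, IsProbabilityMeasure (P θ))
    (hiid : SEiid P X) (hX : ∀ θ i, MemLp (X i) 2 (P θ)) (hm : ∀ θ, ∫ ω, X 0 ω ∂(P θ) ≤ m)
    (hC : ∀ θ, ∫ ω, (X 0 ω - m) ^ 2 ∂(P θ) ≤ C) (k : ℕ) (θ : Θ) :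
    ∫ ω, max (∑ i ∈ Finset.range k, X i ω - k * m) 0 * (X k ω - m) ∂(P θ) ≤ 0 := by
  rcases k with _ | j
  · simp
  have hS : MemLp (fun ω => max (∑ i ∈ Finset.range (j + 1), X i ω - (j + 1 : ℕ) * m) 0) 2
      (P θ) := ((memLp_finsetSum _ fun i _ => hX θ i).sub (memLp_const _)).max_zero
  have hy : MemLp (fun ω => X (j + 1) ω - m) 2 (P θ) := (hX θ _).sub (memLp_const m)
  refine le_of_tendsto_of_tendsto (tendsto_integral_clip_mul_clip hS.1 hy.1
      (hS.integrable_mul hy)) (tendsto_const_div_atTop_nhds_zero_nat C)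
    ((eventually_ge_atTop 1).mono fun M hM => ?_)
  have hM : (0 : ℝ) < M := by exact_mod_cast hM
  have hclip : ∀ θ', ∫ ω, clip (M ^ 2) (X (j + 1) ω - m) ∂(P θ') ≤ C / M ^ 2 := fun θ' =>
    ((hiid.identDistrib (j + 1)).integral_le_SE hP (φ := fun x => clip (M ^ 2) (x - m))
      (by fun_prop) (fun x => clip.abs_le (by positivity) _) θ').trans <|
    SE_le fun θ'' =>
      have := hP θ''
      integral_clip_sub_le (hX θ'' 0) (by positivity) (hm θ'') (hC θ'')
  have := (hiid j).2.integral_mul_le hP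
    (u := fun x => clip M (max (∑ i, x i - (j + 1 : ℕ) * m) 0))
    (v := fun z => clip (M ^ 2) (z - m)) (by fun_prop) (by fun_prop)
    (fun x => clip.nonneg (le_max_right _ _) hM.le)
    (fun x => (le_abs_self _).trans (clip.abs_le hM.le _)) (fun z => clip.abs_le (by positivity) _)
    (div_nonneg ((integral_nonneg fun _ => sq_nonneg _).trans (hC θ)) (by positivity)) hclip θ
  simp only [Finset.sum_range]
  refine this.trans_eq ?_
  field_simp

lemma SEiid.integral_sq_max_sum_sub_le (hP : ∀ θ, IsProbabilityMeasure (P θ))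
    (hiid : SEiid P X) (hX : ∀ θ i, MemLp (X i) 2 (P θ)) (hm : ∀ θ, ∫ ω, X 0 ω ∂(P θ) ≤ m)
    (hC : ∀ θ, ∫ ω, (X 0 ω - m) ^ 2 ∂(P θ) ≤ C) (k : ℕ) (θ : Θ) :
    ∫ ω, max (∑ i ∈ Finset.range k, X i ω - k * m) 0 ^ 2 ∂(P θ) ≤ k * C := by
  induction k with
  | zero => simp
  | succ k ih =>
    have := hP θ
    set S := fun ω => ∑ i ∈ Finset.range k, X i ω - k * m
    have hS : MemLp S 2 (P θ) := (memLp_finsetSum _ fun i _ => hX θ i).sub (memLp_const _)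
    have hy : MemLp (fun ω => X k ω - m) 2 (P θ) := (hX θ k).sub (memLp_const m)
    have hsplit : ∀ ω, ∑ i ∈ Finset.range (k + 1), X i ω - (k + 1 : ℕ) * m = S ω + (X k ω - m) :=
      fun ω => by simp only [S, Finset.sum_range_succ]; push_cast; ring
    have hprod : Integrable (fun ω => 2 * (max (S ω) 0 * (X k ω - m))) (P θ) :=
      (hS.max_zero.integrable_mul hy).const_mul 2
    have hfirst : Integrable (fun ω => max (S ω) 0 ^ 2 + 2 * (max (S ω) 0 * (X k ω - m))) (P θ) :=
      hS.max_zero.integrable_sq.add hprod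
    calc ∫ ω, max (∑ i ∈ Finset.range (k + 1), X i ω - (k + 1 : ℕ) * m) 0 ^ 2 ∂(P θ)
        = ∫ ω, max (S ω + (X k ω - m)) 0 ^ 2 ∂(P θ) := by simp only [hsplit]
      _ ≤ ∫ ω, (max (S ω) 0 ^ 2 + 2 * (max (S ω) 0 * (X k ω - m)) + (X k ω - m) ^ 2) ∂(P θ) :=
          integral_mono (hS.add hy).max_zero.integrable_sq (hfirst.add hy.integrable_sq)
            fun ω => sq_max_add_le _ _
      _ = ∫ ω, max (S ω) 0 ^ 2 ∂(P θ) + 2 * ∫ ω, max (S ω) 0 * (X k ω - m) ∂(P θ)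
            + ∫ ω, (X k ω - m) ^ 2 ∂(P θ) := by
          rw [integral_add hfirst hy.integrable_sq,
            integral_add hS.max_zero.integrable_sq hprod, integral_const_mul]
      _ ≤ k * C + 2 * 0 + C := by
          have hcross_le := hiid.integral_max_sum_sub_mul_le_zero hP hX hm hC k θ
          have hsq_le := hiid.integral_sq_sub_le hP hX hC k θ
          gcongr
      _ = (k + 1 : ℕ) * C := by push_cast; ring

lemma SEiid.integral_sq_max_mean_sub_le (hP : ∀ θ, IsProbabilityMeasure (P θ))
    (hiid : SEiid P X) (hX : ∀ θ i, MemLp (X i) 2 (P θ)) (hm : ∀ θ, ∫ ω, X 0 ω ∂(P θ) ≤ m)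
    (hC : ∀ θ, ∫ ω, (X 0 ω - m) ^ 2 ∂(P θ) ≤ C) {n : ℕ} (hn : 0 < n) (θ : Θ) :
    ∫ ω, max ((∑ i ∈ Finset.range n, X i ω) / n - m) 0 ^ 2 ∂(P θ) ≤ C / n := by
  have hn' : (0 : ℝ) < n := by exact_mod_cast hn
  have hscale : ∀ ω, max ((∑ i ∈ Finset.range n, X i ω) / n - m) 0 ^ 2
      = max (∑ i ∈ Finset.range n, X i ω - n * m) 0 ^ 2 / (n : ℝ) ^ 2 := fun ω => by
    rw [← div_pow, ← max_div_div_right hn'.le, zero_div, sub_div, mul_div_cancel_left₀ _ hn'.ne']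
  calc ∫ ω, max ((∑ i ∈ Finset.range n, X i ω) / n - m) 0 ^ 2 ∂(P θ)
      = (∫ ω, max (∑ i ∈ Finset.range n, X i ω - n * m) 0 ^ 2 ∂(P θ)) / (n : ℝ) ^ 2 := by
        simp only [hscale, integral_div]
    _ ≤ n * C / (n : ℝ) ^ 2 := by
        gcongr
        exact hiid.integral_sq_max_sum_sub_le hP hX hm hC n θ
    _ = C / n := by field_simp

lemma SEiid.integral_sq_max_mean_sub_add_le (hP : ∀ θ, IsProbabilityMeasure (P θ))
    (hiid : SEiid P X) (hX : ∀ θ i, MemLp (X i) 2 (P θ)) {a b : ℝ}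
    (ha : ∀ θ, a ≤ ∫ ω, X 0 ω ∂(P θ)) (hb : ∀ θ, ∫ ω, X 0 ω ∂(P θ) ≤ b)
    (hCa : ∀ θ, ∫ ω, (X 0 ω - a) ^ 2 ∂(P θ) ≤ C) (hCb : ∀ θ, ∫ ω, (X 0 ω - b) ^ 2 ∂(P θ) ≤ C)
    {n : ℕ} (hn : 0 < n) (θ : Θ) :
    ∫ ω, (max ((∑ i ∈ Finset.range n, X i ω) / n - b) 0 ^ 2 +
      max (-((∑ i ∈ Finset.range n, X i ω) / n - a)) 0 ^ 2) ∂(P θ) ≤ 2 * C / n := by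
  have := hP θ
  have hneg : ∀ ω, -((∑ i ∈ Finset.range n, X i ω) / n - a)
      = (∑ i ∈ Finset.range n, -X i ω) / n - -a := fun ω => by
    rw [Finset.sum_neg_distrib]; ring
  simp only [hneg]
  rw [integral_add (integrable_sq_max_sum_div_sub (hX θ) n b)
    (integrable_sq_max_sum_div_sub (Y := fun i ω => -X i ω) (fun i => (hX θ i).neg) n (-a))]
  calc _ ≤ C / n + C / n := add_le_add (hiid.integral_sq_max_mean_sub_le hP hX hb hCb hn θ)
        (hiid.neg.integral_sq_max_mean_sub_le hP (fun θ i => (hX θ i).neg)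
          (fun θ => by rw [integral_neg]; exact neg_le_neg (ha θ))
          (fun θ => (hCa θ).trans_eq' (by congr 1 with ω; ring)) hn θ)
    _ = 2 * C / n := by ring

end IID

/-- Rate of convergence in Peng's law of large numbers:
`𝔼[((X̄_n − μ̄)⁺)² + ((X̄_n − μ_)⁻)²] ≤ 2(σ̄² + (μ̄ − μ_)²)/n`. -/
theorem stmt0 {Ω Θ : Type*} [MeasurableSpace Ω] [Nonempty Θ]
    (P : Θ → Measure Ω) (hP : ∀ θ, IsProbabilityMeasure (P θ))
    (X : ℕ → Ω → ℝ) (hiid : SEiid P X)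
    (hInt : ∀ θ i, Integrable (X i) (P θ))
    (hInt2 : ∀ θ i, Integrable (fun ω => (X i ω) ^ 2) (P θ))
    (μbar μlow σbarSq : ℝ)
    (hμbar : μbar = SE P (X 0))
    (hμlow : μlow = -SE P (fun ω => -X 0 ω))
    (hBdd1 : BddAbove (Set.range fun θ => ∫ ω, X 0 ω ∂(P θ)))
    (hBdd1' : BddAbove (Set.range fun θ => ∫ ω, -X 0 ω ∂(P θ)))
    (hσbarSq : σbarSq = ⨆ θ, ∫ ω, (X 0 ω - ∫ ω', X 0 ω' ∂(P θ)) ^ 2 ∂(P θ))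
    (hBddV : BddAbove (Set.range fun θ =>
      ∫ ω, (X 0 ω - ∫ ω', X 0 ω' ∂(P θ)) ^ 2 ∂(P θ)))
    (n : ℕ) (hn : 1 ≤ n) :
    SE P (fun ω =>
        (max ((∑ i ∈ Finset.range n, X i ω) / n - μbar) 0) ^ 2 +
        (max (-((∑ i ∈ Finset.range n, X i ω) / n - μlow)) 0) ^ 2)
      ≤ 2 * (σbarSq + (μbar - μlow) ^ 2) / n := by
  have hX : ∀ θ i, MemLp (X i) 2 (P θ) := fun θ i =>
    (memLp_two_iff_integrable_sq (hInt θ i).1).2 (hInt2 θ i)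
  have hlow : ∀ θ, μlow ≤ ∫ ω, X 0 ω ∂(P θ) := fun θ => by
    have h := le_ciSup hBdd1' θ
    rw [integral_neg] at h
    exact hμlow ▸ neg_le.mp h
  have hup : ∀ θ, ∫ ω, X 0 ω ∂(P θ) ≤ μbar := fun θ => hμbar ▸ le_ciSup hBdd1 θ
  have hdev : ∀ θ, ∀ c ∈ Set.Icc μlow μbar,
      ∫ ω, (X 0 ω - c) ^ 2 ∂(P θ) ≤ σbarSq + (μbar - μlow) ^ 2 := fun θ c hc =>
    have := hP θ
    integral_sq_sub_le_of_mem_Icc (hX θ 0) ⟨hlow θ, hup θ⟩ hc (hσbarSq ▸ le_ciSup hBddV θ)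
  have hab : μlow ≤ μbar := (hlow (Classical.arbitrary Θ)).trans (hup _)
  exact SE_le (hiid.integral_sq_max_mean_sub_add_le hP hX hlow hup
    (hdev · μlow ⟨le_rfl, hab⟩) (hdev · μbar ⟨hab, le_rfl⟩) hn)
end

section
/- Let X_1, X_2, … be an i.i.d. sequence of ℝ^d-valued random vectors under the sublinear expectation 𝔼 = sup_{θ∈Θ} E_θ. Suppose the convex hull 𝒫 of the closure of the set of possible means {E_θ[X_1] : θ ∈ Θ} is a bounded convex polytope with m vertices, and that sup_{θ∈Θ} E_θ[|X_1 − E_θ[X_1]|²] < ∞. Then for every n ≥ 1, with X̄_n := (X_1 + ⋯ + X_n)/n, 𝔼[d_𝒫(X̄_n)²] ≤ m (sup_{θ∈Θ} E_θ[|X_1 − E_θ[X_1]|²] + diam(𝒫)²)/n, where d_A(x) := inf_{y∈A} |x − y| is the Euclidean distance from x to A and diam(𝒫) is the diameter of 𝒫. -/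
open MeasureTheory

/-- `X` and `Y` (vector-valued) are identically distributed under the sublinear expectation. -/
def SEIdentDistribV {Ω Θ E : Type*} [MeasurableSpace Ω] [TopologicalSpace E]
    (P : Θ → Measure Ω) (X Y : Ω → E) : Prop :=
  ∀ φ : E → ℝ, Continuous φ → (∃ C, ∀ x, |φ x| ≤ C) →
    SE P (fun ω => φ (X ω)) = SE P (fun ω => φ (Y ω))

/-- The vector `Y` is independent of the random vector `X = (X_1, …, X_m)` under the
sublinear expectation. -/
def SEIndepOfV {Ω Θ E : Type*} [MeasurableSpace Ω] [TopologicalSpace E]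
    (P : Θ → Measure Ω) {m : ℕ} (Y : Ω → E) (X : Ω → Fin m → E) : Prop :=
  ∀ φ : (Fin m → E) → E → ℝ,
    Continuous (fun p : (Fin m → E) × E => φ p.1 p.2) →
    (∃ C, ∀ x y, |φ x y| ≤ C) →
    SE P (fun ω => φ (X ω) (Y ω)) = SE P (fun ω => SE P (fun ω' => φ (X ω) (Y ω')))

/-- `X 0, X 1, …` is an i.i.d. sequence of random vectors under the sublinear expectation. -/
def SEiidV {Ω Θ E : Type*} [MeasurableSpace Ω] [TopologicalSpace E]
    (P : Θ → Measure Ω) (X : ℕ → Ω → E) : Prop :=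
  ∀ i : ℕ, SEIdentDistribV P (X (i + 1)) (X 0) ∧
    SEIndepOfV P (X (i + 1)) (fun ω (j : Fin (i + 1)) => X (j : ℕ) ω)

/-!
Let `C_v` be the cone of feasible directions of the polytope `𝒫` at its vertex `v`. If `y` is the
point of `𝒫` nearest to `x` and `k` a vertex maximising `⟪x - y, ·⟫`, then `y` is also the point
of `k + C_k` nearest to `x`, whence `d_𝒫(x)² ≤ ∑_v d_{C_v}(x - v)²`.

Each summand is controlled separately. Every mean `E_θ X₁ - v` lies in `C_v`, translation by an
element of `C_v` does not increase `d_{C_v}`, and `d_{C_v}²` lies below the paraboloid `‖· - p‖²`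
attached to a nearest point `p`. So, by independence, each step of the walk
`S_k = ∑_{i<k} (X_i - v)/n` raises `𝔼[d_{C_v}(S_k)²]` by at most `σ̄²/n²`, and after `n` steps
it is at most `σ̄²/n`. Independence only applies to bounded test functions, so the walk is run on
`min (d_{C_v}², L)` and `L → ∞` by monotone convergence.
-/

open Metric
open scoped RealInnerProductSpace

section FeasibleCone

variable {F : Type*} [NormedAddCommGroup F] [InnerProductSpace ℝ F]

def feasibleCone (S : Set F) (v : F) : PointedCone ℝ F :=
  PointedCone.hull ℝ ((· - v) '' S)

lemma sub_mem_feasibleCone {S : Set F} {v w : F} (hw : w ∈ S) : w - v ∈ feasibleCone S v :=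
  PointedCone.subset_hull ⟨w, hw, rfl⟩

lemma infDist_add_le_of_mem (C : PointedCone ℝ F) {t : F} (ht : t ∈ C) (s : F) :
    infDist (s + t) C ≤ infDist s C :=
  (le_infDist ⟨0, C.zero_mem⟩).2 fun u hu =>
    (infDist_le_dist_of_mem (C.add_mem hu ht)).trans_eq (dist_add_right s u t)

lemma norm_sub_le_norm_sub_of_inner_nonpos {x y z : F} (h : ⟪x - y, z - y⟫ ≤ 0) :
    ‖x - y‖ ≤ ‖x - z‖ := by
  have hsq : ‖x - z‖ ^ 2 = ‖x - y‖ ^ 2 - 2 * ⟪x - y, z - y⟫ + ‖z - y‖ ^ 2 := by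
    rw [← norm_sub_sq_real, sub_sub_sub_cancel_right]
  exact (sq_le_sq₀ (norm_nonneg _) (norm_nonneg _)).1 (by nlinarith [sq_nonneg ‖z - y‖])

lemma exists_infDist_convexHull_le_infDist_feasibleCone {V : Finset F} (hV : V.Nonempty)
    (x : F) : ∃ k ∈ V, infDist x (convexHull ℝ (V : Set F)) ≤
      infDist (x - k) (feasibleCone (convexHull ℝ (V : Set F)) k) := by
  set K := convexHull ℝ (V : Set F)
  obtain ⟨y, hyK, hxy⟩ := (V.finite_toSet.isCompact_convexHull (𝕜 := ℝ)).exists_infDist_eq_dist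
    (Finset.coe_nonempty.2 hV).convexHull x
  have hnormal : ∀ z ∈ K, ⟪x - y, z - y⟫ ≤ 0 := by
    refine (norm_eq_iInf_iff_real_inner_le_zero (convex_convexHull ℝ _) hyK).1 ?_
    rw [← dist_eq_norm, ← hxy, infDist_eq_iInf]
    simp only [dist_eq_norm]
  obtain ⟨k, hkV, hkmax⟩ := V.exists_max_image (fun w => ⟪x - y, w⟫) hV
  have hK : K ⊆ {z | ⟪x - y, z⟫ ≤ ⟪x - y, k⟫} :=
    convexHull_min hkmax (convex_halfSpace_le (innerₗ F (x - y)).isLinear _)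
  -- `C_k` lies in the half-space `⟪x - y, ·⟫ ≤ 0`, written as the dual cone of `{y - x}`
  have hcone : feasibleCone K k ≤ PointedCone.dual (innerₗ F) {y - x} := by
    refine Submodule.span_le.2 ?_
    rintro _ ⟨w, hw, rfl⟩
    have : ⟪x - y, w⟫ ≤ ⟪x - y, k⟫ := hK hw
    simp only [SetLike.mem_coe, PointedCone.mem_dual, Set.mem_singleton_iff, forall_eq,
      innerₗ_apply_apply, ← neg_sub x y, inner_neg_left, inner_sub_right]
    linarith
  refine ⟨k, hkV, ?_⟩
  rw [hxy]
  refine (le_infDist ⟨0, (feasibleCone K k).zero_mem⟩).2 fun t ht => ?_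
  rw [dist_eq_norm, dist_eq_norm, sub_sub]
  apply norm_sub_le_norm_sub_of_inner_nonpos
  have ht' := hcone ht
  simp only [PointedCone.mem_dual, Set.mem_singleton_iff, forall_eq, innerₗ_apply_apply,
    ← neg_sub x y, inner_neg_left] at ht'
  have hk := hnormal k (subset_convexHull ℝ _ hkV)
  rw [add_sub_right_comm, inner_add_right]
  linarith

lemma infDist_convexHull_sq_le_sum_feasibleCone {V : Finset F} (hV : V.Nonempty) (x : F) :
    infDist x (convexHull ℝ (V : Set F)) ^ 2 ≤
      ∑ v ∈ V, infDist (x - v) (feasibleCone (convexHull ℝ (V : Set F)) v) ^ 2 := by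
  obtain ⟨k, hkV, hk⟩ := exists_infDist_convexHull_le_infDist_feasibleCone hV x
  calc infDist x (convexHull ℝ (V : Set F)) ^ 2
      ≤ infDist (x - k) (feasibleCone (convexHull ℝ (V : Set F)) k) ^ 2 := by
        gcongr; exact infDist_nonneg
    _ ≤ _ := Finset.single_le_sum (f := fun v =>
        infDist (x - v) (feasibleCone (convexHull ℝ (V : Set F)) v) ^ 2)
        (fun v _ => sq_nonneg _) hkV

end FeasibleCone

section SublinearExpectation

variable {Ω Θ : Type*} [MeasurableSpace Ω] {P : Θ → Measure Ω}

lemma SEiidV.comp {E E' : Type*} [TopologicalSpace E] [TopologicalSpace E']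
    {X : ℕ → Ω → E} (hX : SEiidV P X) {f : E → E'} (hf : Continuous f) :
    SEiidV P (fun i ω => f (X i ω)) := fun i =>
  ⟨fun φ hφ hφb => (hX i).1 (φ ∘ f) (hφ.comp hf) (hφb.imp fun _ hC x => hC (f x)),
    fun φ hφ hφb => (hX i).2 (fun x y => φ (f ∘ x) (f y))
      (hφ.comp ((continuous_pi fun j => hf.comp ((continuous_apply j).comp continuous_fst)).prodMk
        (hf.comp continuous_snd)))
      (hφb.imp fun _ hC _ _ => hC _ _)⟩

lemma SE_nonneg {f : Ω → ℝ} (hf : ∀ ω, 0 ≤ f ω) : 0 ≤ SE P f :=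
  Real.iSup_nonneg fun _ => integral_nonneg hf

lemma integral_le_SE [∀ θ, IsProbabilityMeasure (P θ)] {f : Ω → ℝ} (hf : ∀ ω, 0 ≤ f ω)
    {C : ℝ} (hfC : ∀ ω, f ω ≤ C) (θ : Θ) : ∫ ω, f ω ∂(P θ) ≤ SE P f :=
  le_ciSup (f := fun θ => ∫ ω, f ω ∂(P θ)) ⟨C, by
    rintro _ ⟨θ', rfl⟩
    calc ∫ ω, f ω ∂(P θ') ≤ ∫ _, C ∂(P θ') :=
          integral_mono_of_nonneg (.of_forall hf) (integrable_const C) (.of_forall hfC)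
      _ = C := by simp⟩ θ

variable [Nonempty Θ] [∀ θ, IsProbabilityMeasure (P θ)] {E : Type*} [NormedAddCommGroup E]
  {X : ℕ → Ω → E} {G : E → ℝ} {C c : ℝ}

lemma SE_sum_range_succ_le (hX : SEiidV P X)
    (hXm : ∀ θ i, AEStronglyMeasurable (X i) (P θ)) (hG : Continuous G) (hG0 : ∀ x, 0 ≤ G x)
    (hGC : ∀ x, G x ≤ C) (hstep : ∀ s, SE P (fun ω => G (s + X 0 ω)) ≤ G s + c) (n : ℕ) :
    SE P (fun ω => G (∑ i ∈ Finset.range (n + 1), X i ω)) ≤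
      SE P (fun ω => G (∑ i ∈ Finset.range n, X i ω)) + c := by
  rcases n with _ | i
  · simpa [SE] using hstep 0
  set S : Ω → E := fun ω => ∑ t ∈ Finset.range (i + 1), X t ω
  have hGabs : ∀ x, |G x| ≤ C := fun x => (abs_of_nonneg (hG0 x)).trans_le (hGC x)
  have hindep := (hX i).2 (fun x y => G (∑ j, x j + y))
    (hG.comp ((continuous_finsetSum _ fun j _ => (continuous_apply j).comp continuous_fst).add
      continuous_snd)) ⟨C, fun _ _ => hGabs _⟩
  have hident : ∀ s, SE P (fun ω => G (s + X (i + 1) ω)) = SE P (fun ω => G (s + X 0 ω)) :=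
    fun s => (hX i).1 (fun y => G (s + y)) (by fun_prop) ⟨C, fun _ => hGabs _⟩
  have hGS : ∀ θ, Integrable (fun ω => G (S ω)) (P θ) := fun θ =>
    Integrable.mono' (integrable_const C)
      (hG.comp_aestronglyMeasurable (Finset.aestronglyMeasurable_fun_sum _ fun t _ => hXm θ t))
      (.of_forall fun ω => by rw [Real.norm_eq_abs]; exact hGabs _)
  calc SE P (fun ω => G (∑ t ∈ Finset.range (i + 1 + 1), X t ω))
      = SE P (fun ω => SE P (fun ω' => G (S ω + X 0 ω'))) := by
        -- independence of `X (i + 1)` from `X 0, …, X i`, then `X (i + 1) ∼ X 0`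
        simp only [Finset.sum_range_succ _ (i + 1), S, ← hident,
          ← Fin.sum_univ_eq_sum_range (fun t => X t _)]
        exact hindep
    _ ≤ SE P (fun ω => G (S ω)) + c := ciSup_le fun θ => by
        calc ∫ ω, SE P (fun ω' => G (S ω + X 0 ω')) ∂(P θ) ≤ ∫ ω, (G (S ω) + c) ∂(P θ) :=
              integral_mono_of_nonneg (.of_forall fun ω => SE_nonneg fun _ => hG0 _)
                ((hGS θ).add (integrable_const c)) (.of_forall fun ω => hstep (S ω))
          _ = ∫ ω, G (S ω) ∂(P θ) + c := by simp [integral_add (hGS θ) (integrable_const c)]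
          _ ≤ SE P (fun ω => G (S ω)) + c := by
              gcongr; exact integral_le_SE (fun _ => hG0 _) (fun _ => hGC _) θ

lemma SE_sum_range_le (hX : SEiidV P X)
    (hXm : ∀ θ i, AEStronglyMeasurable (X i) (P θ)) (hG : Continuous G) (hG0 : ∀ x, 0 ≤ G x)
    (hGC : ∀ x, G x ≤ C) (hstep : ∀ s, SE P (fun ω => G (s + X 0 ω)) ≤ G s + c) (n : ℕ) :
    SE P (fun ω => G (∑ i ∈ Finset.range n, X i ω)) ≤ G 0 + n * c := by
  induction n with
  | zero => simp [SE]
  | succ n ih =>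
    calc _ ≤ _ := SE_sum_range_succ_le hX hXm hG hG0 hGC hstep n
      _ ≤ G 0 + (n + 1 : ℕ) * c := by push_cast; linarith

end SublinearExpectation

section OneStep

variable {Ω F : Type*} [MeasurableSpace Ω] {μ : Measure Ω} [IsProbabilityMeasure μ]
  [NormedAddCommGroup F] [InnerProductSpace ℝ F] [ProperSpace F]

lemma integral_min_infDist_sq_add_smul_le {T : Set F} (hT : T.Nonempty) {Z : Ω → F}
    (hZ : MemLp Z 2 μ) (s : F) (r : ℝ) {L : ℝ} (hL : 0 ≤ L) :
    ∫ ω, min (infDist (s + r • Z ω) T ^ 2) L ∂μ ≤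
      min (infDist (s + r • ∫ ω', Z ω' ∂μ) T ^ 2) L +
        r ^ 2 * ∫ ω, ‖Z ω - ∫ ω', Z ω' ∂μ‖ ^ 2 ∂μ := by
  set a := s + r • ∫ ω', Z ω' ∂μ
  set W : Ω → F := fun ω => Z ω - ∫ ω', Z ω' ∂μ
  obtain ⟨p, hp, hap⟩ := exists_mem_closure_infDist_eq_dist hT a
  have hW : MemLp W 2 μ := hZ.sub (memLp_const _)
  have hW1 : Integrable W μ := hW.integrable one_le_two
  have hW2 : Integrable (fun ω => ‖W ω‖ ^ 2) μ := hW.integrable_norm_pow two_ne_zero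
  have hW0 : ∫ ω, W ω ∂μ = 0 := by
    simp only [W]
    rw [integral_sub (hZ.integrable one_le_two) (integrable_const _)]
    simp
  set q : Ω → ℝ := fun ω => ‖a - p‖ ^ 2 + 2 * r * ⟪a - p, W ω⟫ + r ^ 2 * ‖W ω‖ ^ 2
  have hcross : Integrable (fun ω => 2 * r * ⟪a - p, W ω⟫) μ :=
    (hW1.const_inner (a - p)).const_mul _
  have hlin : Integrable (fun ω => ‖a - p‖ ^ 2 + 2 * r * ⟪a - p, W ω⟫) μ :=
    (integrable_const _).add hcross
  have hq : Integrable q μ := hlin.add (hW2.const_mul _)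
  have hq_integral : ∫ ω, q ω ∂μ = ‖a - p‖ ^ 2 + r ^ 2 * ∫ ω, ‖W ω‖ ^ 2 ∂μ := by
    rw [integral_add hlin (hW2.const_mul _), integral_add (integrable_const _) hcross,
      integral_const_mul, integral_const_mul, integral_inner hW1, hW0]
    simp
  have hpointwise : ∀ ω, infDist (s + r • Z ω) T ^ 2 ≤ q ω := by
    intro ω
    have hsplit : s + r • Z ω - p = (a - p) + r • W ω := by
      simp only [a, W, smul_sub]; abel
    calc infDist (s + r • Z ω) T ^ 2 ≤ dist (s + r • Z ω) p ^ 2 := by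
          gcongr
          · exact infDist_nonneg
          · rw [← infDist_closure]
            exact infDist_le_dist_of_mem hp
      _ = q ω := by
        rw [dist_eq_norm, hsplit, norm_add_sq_real, real_inner_smul_right, norm_smul,
          mul_pow, Real.norm_eq_abs, sq_abs]
        ring
  have hq_min : Integrable (fun ω => min (q ω) L) μ := hq.inf (integrable_const L)
  calc ∫ ω, min (infDist (s + r • Z ω) T ^ 2) L ∂μ ≤ ∫ ω, min (q ω) L ∂μ :=
        integral_mono_of_nonneg (.of_forall fun ω => le_min (sq_nonneg _) hL) hq_min
          (.of_forall fun ω => min_le_min_right L (hpointwise ω))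
    _ ≤ min (‖a - p‖ ^ 2 + r ^ 2 * ∫ ω, ‖W ω‖ ^ 2 ∂μ) L := by
        refine le_min ?_ ?_
        · rw [← hq_integral]
          exact integral_mono hq_min hq fun ω => min_le_left _ _
        · calc ∫ ω, min (q ω) L ∂μ ≤ ∫ _, L ∂μ :=
                integral_mono hq_min (integrable_const L) fun ω => min_le_right _ _
            _ = L := by simp
    _ ≤ min (‖a - p‖ ^ 2) L + r ^ 2 * ∫ ω, ‖W ω‖ ^ 2 ∂μ := by
        rw [← min_add_add_right]
        exact min_le_min_left _ (le_add_of_nonneg_right (by positivity))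
    _ = _ := by rw [hap, dist_eq_norm]

end OneStep

lemma integrable_and_integral_le_of_integral_min_le {α : Type*} [MeasurableSpace α]
    {μ : Measure α} [IsFiniteMeasure μ] {f : α → ℝ} (hf : AEStronglyMeasurable f μ)
    (hf0 : 0 ≤ᵐ[μ] f) {B : ℝ} (hB : ∀ k : ℕ, ∫ x, min (f x) k ∂μ ≤ B) :
    Integrable f μ ∧ ∫ x, f x ∂μ ≤ B := by
  have hmin_nonneg : ∀ k : ℕ, 0 ≤ᵐ[μ] fun x => min (f x) k := fun k => by
    filter_upwards [hf0] with x hx using le_min hx k.cast_nonneg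
  have hmin_int : ∀ k : ℕ, Integrable (fun x => min (f x) k) μ := fun k =>
    Integrable.mono' (integrable_const (k : ℝ)) (hf.inf aestronglyMeasurable_const) (by
      filter_upwards [hmin_nonneg k] with x hx
      rw [Real.norm_eq_abs, abs_of_nonneg hx]
      exact min_le_right _ _)
  have hB0 : 0 ≤ B := (integral_nonneg_of_ae (hmin_nonneg 0)).trans (hB 0)
  have hlintegral : ∫⁻ x, ENNReal.ofReal (f x) ∂μ ≤ ENNReal.ofReal B := by
    calc ∫⁻ x, ENNReal.ofReal (f x) ∂μ = ∫⁻ x, ⨆ k : ℕ, ENNReal.ofReal (min (f x) k) ∂μ := by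
          refine lintegral_congr fun x => le_antisymm ?_ (iSup_le fun k => ?_)
          · exact le_iSup_of_le ⌈f x⌉₊ (by rw [min_eq_left (Nat.le_ceil _)])
          · exact ENNReal.ofReal_le_ofReal (min_le_left _ _)
      _ = ⨆ k : ℕ, ∫⁻ x, ENNReal.ofReal (min (f x) k) ∂μ :=
          lintegral_iSup' (fun k => (hmin_int k).aemeasurable.ennreal_ofReal)
            (.of_forall fun x i j hij => ENNReal.ofReal_le_ofReal
              (min_le_min_left _ (Nat.cast_le.2 hij)))
      _ ≤ ENNReal.ofReal B := iSup_le fun k => by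
          rw [← ofReal_integral_eq_lintegral_ofReal (hmin_int k) (hmin_nonneg k)]
          exact ENNReal.ofReal_le_ofReal (hB k)
  have hint : Integrable f μ :=
    ⟨hf, (hasFiniteIntegral_iff_ofReal hf0).2 (hlintegral.trans_lt ENNReal.ofReal_lt_top)⟩
  refine ⟨hint, ?_⟩
  rw [integral_eq_lintegral_of_nonneg_ae hf0 hf]
  exact ENNReal.toReal_le_of_le_ofReal hB0 hlintegral

lemma inv_smul_sum_range_sub {F : Type*} [AddCommGroup F] [Module ℝ F] {n : ℕ} (hn : n ≠ 0)
    (x : ℕ → F) (v : F) :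
    (n : ℝ)⁻¹ • ∑ i ∈ Finset.range n, x i - v = ∑ i ∈ Finset.range n, (n : ℝ)⁻¹ • (x i - v) := by
  rw [← Finset.smul_sum, Finset.sum_sub_distrib, Finset.sum_const, Finset.card_range, smul_sub,
    ← Nat.cast_smul_eq_nsmul ℝ, smul_smul, inv_mul_cancel₀ (Nat.cast_ne_zero.2 hn), one_smul]

section PerVertex

variable {Ω Θ F : Type*} [MeasurableSpace Ω] [Nonempty Θ] {P : Θ → Measure Ω}
  [∀ θ, IsProbabilityMeasure (P θ)] [NormedAddCommGroup F] [InnerProductSpace ℝ F]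
  [ProperSpace F] {X : ℕ → Ω → F}

lemma SE_min_infDist_sq_le (hX : SEiidV P X) (hXm : ∀ θ i, AEStronglyMeasurable (X i) (P θ))
    (hX0 : ∀ θ, MemLp (X 0) 2 (P θ)) (C : PointedCone ℝ F) {v : F}
    (hmean : ∀ θ, ∫ ω, X 0 ω ∂(P θ) - v ∈ C) {σsq : ℝ}
    (hσ : ∀ θ, ∫ ω, ‖X 0 ω - ∫ ω', X 0 ω' ∂(P θ)‖ ^ 2 ∂(P θ) ≤ σsq) {L : ℝ} (hL : 0 ≤ L)
    {n : ℕ} (hn : n ≠ 0) :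
    SE P (fun ω => min (infDist ((n : ℝ)⁻¹ • ∑ i ∈ Finset.range n, X i ω - v) C ^ 2) L) ≤
      σsq / n := by
  set r : ℝ := (n : ℝ)⁻¹
  set G : F → ℝ := fun x => min (infDist x C ^ 2) L
  have hG : Continuous G := ((continuous_infDist_pt _).pow 2).min continuous_const
  have hstep : ∀ s, SE P (fun ω => G (s + r • (X 0 ω - v))) ≤ G s + r ^ 2 * σsq :=
    fun s => ciSup_le fun θ => by
      have hshift : infDist (s - r • v + r • ∫ ω, X 0 ω ∂(P θ)) C ≤ infDist s C := by
        rw [sub_add_eq_add_sub, add_sub_assoc, ← smul_sub]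
        exact infDist_add_le_of_mem C (C.smul_mem (by positivity) (hmean θ)) s
      calc ∫ ω, G (s + r • (X 0 ω - v)) ∂(P θ)
          = ∫ ω, min (infDist (s - r • v + r • X 0 ω) C ^ 2) L ∂(P θ) := by
            simp only [G, smul_sub, sub_add_eq_add_sub, add_sub_assoc]
        _ ≤ _ := integral_min_infDist_sq_add_smul_le ⟨0, C.zero_mem⟩ (hX0 θ) _ r hL
        _ ≤ G s + r ^ 2 * σsq := by
            refine add_le_add (min_le_min_right L ?_) (by gcongr; exact hσ θ)
            exact pow_le_pow_left₀ infDist_nonneg hshift 2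
  have hsum := SE_sum_range_le (hX.comp (f := fun x => r • (x - v)) (by fun_prop))
    (fun θ i => ((hXm θ i).sub aestronglyMeasurable_const).const_smul r) hG
    (fun _ => le_min (sq_nonneg _) hL) (fun _ => min_le_right _ _) hstep n
  have hG0 : G 0 = 0 := by simp [G, infDist_zero_of_mem C.zero_mem, hL]
  calc SE P (fun ω => min (infDist ((n : ℝ)⁻¹ • ∑ i ∈ Finset.range n, X i ω - v) C ^ 2) L)
      = SE P (fun ω => G (∑ i ∈ Finset.range n, r • (X i ω - v))) := by
        simp only [G, r, inv_smul_sum_range_sub hn]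
    _ ≤ G 0 + n * (r ^ 2 * σsq) := hsum
    _ = σsq / n := by
        simp only [hG0, zero_add, r]
        field_simp

lemma integrable_and_integral_infDist_sq_le (hX : SEiidV P X)
    (hXm : ∀ θ i, AEStronglyMeasurable (X i) (P θ)) (hX0 : ∀ θ, MemLp (X 0) 2 (P θ))
    (C : PointedCone ℝ F) {v : F} (hmean : ∀ θ, ∫ ω, X 0 ω ∂(P θ) - v ∈ C) {σsq : ℝ}
    (hσ : ∀ θ, ∫ ω, ‖X 0 ω - ∫ ω', X 0 ω' ∂(P θ)‖ ^ 2 ∂(P θ) ≤ σsq) {n : ℕ} (hn : n ≠ 0)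
    (θ : Θ) :
    Integrable (fun ω => infDist ((n : ℝ)⁻¹ • ∑ i ∈ Finset.range n, X i ω - v) C ^ 2) (P θ) ∧
      ∫ ω, infDist ((n : ℝ)⁻¹ • ∑ i ∈ Finset.range n, X i ω - v) C ^ 2 ∂(P θ) ≤ σsq / n :=
  integrable_and_integral_le_of_integral_min_le
    (((continuous_infDist_pt _).pow 2).comp_aestronglyMeasurable
      (((Finset.aestronglyMeasurable_fun_sum _ fun i _ => hXm θ i).const_smul _).sub
        aestronglyMeasurable_const))
    (.of_forall fun _ => sq_nonneg _) fun k =>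
      (integral_le_SE (fun _ => le_min (sq_nonneg _) k.cast_nonneg) (fun _ => min_le_right _ _)
        θ).trans (SE_min_infDist_sq_le hX hXm hX0 C hmean hσ k.cast_nonneg hn)

end PerVertex

/-- Rate of convergence in the multidimensional law of large numbers: if the convex hull `𝒫`
of the closure of the set of possible means is a bounded convex polytope with `m` vertices,
then `𝔼[d_PP(X̄_n)²] ≤ m (sup_θ E_θ[|X_1 − E_θ X_1|²] + diam(PP)²)/n`. -/
theorem stmt1 {Ω Θ : Type*} [MeasurableSpace Ω] [Nonempty Θ] {d : ℕ}
    (P : Θ → Measure Ω) (hP : ∀ θ, IsProbabilityMeasure (P θ))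
    (X : ℕ → Ω → EuclideanSpace ℝ (Fin d)) (hiid : SEiidV P X)
    (hInt : ∀ θ i, Integrable (X i) (P θ))
    (hInt2 : ∀ θ i, Integrable (fun ω => ‖X i ω‖ ^ 2) (P θ))
    (PP : Set (EuclideanSpace ℝ (Fin d)))
    (hPPdef : PP = convexHull ℝ (closure {μ | ∃ θ, μ = ∫ ω, X 0 ω ∂(P θ)}))
    (m : ℕ) (V : Finset (EuclideanSpace ℝ (Fin d))) (hVcard : V.card = m)
    (hVP : PP = convexHull ℝ (V : Set (EuclideanSpace ℝ (Fin d))))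
    (σbarSq : ℝ)
    (hσbarSq : σbarSq = ⨆ θ, ∫ ω, ‖X 0 ω - ∫ ω', X 0 ω' ∂(P θ)‖ ^ 2 ∂(P θ))
    (hBddV : BddAbove (Set.range fun θ =>
      ∫ ω, ‖X 0 ω - ∫ ω', X 0 ω' ∂(P θ)‖ ^ 2 ∂(P θ)))
    (n : ℕ) (hn : 1 ≤ n) :
    SE P (fun ω =>
        (Metric.infDist ((n : ℝ)⁻¹ • ∑ i ∈ Finset.range n, X i ω) PP) ^ 2)
      ≤ m * (σbarSq + (Metric.diam PP) ^ 2) / n := by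
  have := hP
  have hmean : ∀ θ, ∫ ω, X 0 ω ∂(P θ) ∈ PP := fun θ =>
    hPPdef ▸ subset_convexHull ℝ _ (subset_closure ⟨θ, rfl⟩)
  have hV : V.Nonempty := by
    rw [← Finset.coe_nonempty, ← convexHull_nonempty_iff (𝕜 := ℝ), ← hVP]
    exact ⟨_, hmean (Classical.arbitrary Θ)⟩
  have hσ : ∀ θ, ∫ ω, ‖X 0 ω - ∫ ω', X 0 ω' ∂(P θ)‖ ^ 2 ∂(P θ) ≤ σbarSq := fun θ =>
    hσbarSq ▸ le_ciSup hBddV θ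
  have hX0 : ∀ θ, MemLp (X 0) 2 (P θ) := fun θ =>
    (memLp_two_iff_integrable_sq_norm (hInt θ 0).1).2 (hInt2 θ 0)
  set avg : Ω → EuclideanSpace ℝ (Fin d) := fun ω => (n : ℝ)⁻¹ • ∑ i ∈ Finset.range n, X i ω
  have hvertex : ∀ v θ, Integrable (fun ω => infDist (avg ω - v) (feasibleCone PP v) ^ 2) (P θ) ∧
      ∫ ω, infDist (avg ω - v) (feasibleCone PP v) ^ 2 ∂(P θ) ≤ σbarSq / n := fun v θ =>
    integrable_and_integral_infDist_sq_le hiid (fun θ i => (hInt θ i).1) hX0 _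
      (fun θ => sub_mem_feasibleCone (hmean θ)) hσ (Nat.one_le_iff_ne_zero.1 hn) θ
  refine ciSup_le fun θ => ?_
  calc ∫ ω, infDist (avg ω) PP ^ 2 ∂(P θ)
      ≤ ∫ ω, ∑ v ∈ V, infDist (avg ω - v) (feasibleCone PP v) ^ 2 ∂(P θ) :=
        integral_mono_of_nonneg (.of_forall fun _ => sq_nonneg _)
          (integrable_finsetSum _ fun v _ => (hvertex v θ).1)
          (.of_forall fun _ => hVP ▸ infDist_convexHull_sq_le_sum_feasibleCone hV _)
    _ = ∑ v ∈ V, ∫ ω, infDist (avg ω - v) (feasibleCone PP v) ^ 2 ∂(P θ) :=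
        integral_finsetSum _ fun v _ => (hvertex v θ).1
    _ ≤ ∑ _v ∈ V, σbarSq / n := Finset.sum_le_sum fun v _ => (hvertex v θ).2
    _ = m * σbarSq / n := by rw [Finset.sum_const, hVcard, nsmul_eq_mul, mul_div_assoc]
    _ ≤ m * (σbarSq + diam PP ^ 2) / n := by
        gcongr
        exact le_add_of_nonneg_right (sq_nonneg _)
end

section
/- Let X be an ℝ^d-valued random vector under the sublinear expectation 𝔼, let 𝒫 be the convex hull of the closure of {E_θ[X] : θ ∈ Θ}, assumed bounded, and suppose sup_{θ∈Θ} E_θ[|X − E_θ[X]|²] < ∞. Let φ : ℝ^d → ℝ be differentiable with Lipschitz gradient Dφ having Lipschitz constant λ. Then for every y ∈ ℝ^d, every integer n ≥ 1, and every μ* ∈ 𝒫 with μ* · Dφ(y) = sup_{μ∈𝒫} μ · Dφ(y), one has |𝔼[φ(y + (X − μ*)/n)] − φ(y)| ≤ λ (sup_{θ∈Θ} E_θ[|X − E_θ[X]|²] + diam(𝒫)²)/(2n²). -/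
/-!
A second-order Taylor expansion around `y`, with remainder controlled by the Lipschitz constant
`λ` of `Dφ`, gives for every `θ`
`E_θ[φ(y + (X - μ*)/n)] = φ(y) + ⟪Dφ(y), E_θ[X] - μ*⟫/n + r_θ` with
`|r_θ| ≤ λ E_θ|X - μ*|² / (2n²) = λ (Var_θ + |E_θ[X] - μ*|²) / (2n²) ≤ λ (sup Var + diam²𝒫) / (2n²)`.
The linear terms are `≤ 0` since `μ*` maximizes `⟪·, Dφ(y)⟫` on `𝒫`, and their supremum over `θ`
is `0`, because a continuous linear functional has the same supremum on the means as on the closed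
convex hull `𝒫` of the means. Hence `sup_θ E_θ[φ(y + (X - μ*)/n)]` lies within that bound of `φ(y)`.
-/

open MeasureTheory RealInnerProductSpace

theorem norm_sub_sub_fderiv_le_of_lipschitzWith {E F : Type*} [NormedAddCommGroup E]
    [NormedSpace ℝ E] [NormedAddCommGroup F] [NormedSpace ℝ F] {f : E → F} {f' : E → E →L[ℝ] F}
    {L : NNReal} (hf : ∀ x, HasFDerivAt f (f' x) x) (hL : LipschitzWith L f') (a v : E) :
    ‖f (a + v) - f a - f' a v‖ ≤ L / 2 * ‖v‖ ^ 2 := by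
  have hderiv : ∀ t : ℝ, HasDerivAt (fun t : ℝ => f (a + t • v) - f a - t • f' a v)
      (f' (a + t • v) v - f' a v) t := by
    intro t
    have hline : HasDerivAt (fun t : ℝ => a + t • v) v t := by
      simpa using ((hasDerivAt_id t).smul_const v).const_add a
    simpa using (((hf _).comp_hasDerivAt t hline).sub_const (f a)).fun_sub
      ((hasDerivAt_id t).smul_const (f' a v))
  have hbound : ∀ t ∈ Set.Ico (0 : ℝ) 1,
      ‖f' (a + t • v) v - f' a v‖ ≤ L * t * ‖v‖ ^ 2 := by
    intro t ht
    calc ‖f' (a + t • v) v - f' a v‖ = ‖(f' (a + t • v) - f' a) v‖ := rfl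
      _ ≤ ‖f' (a + t • v) - f' a‖ * ‖v‖ := ContinuousLinearMap.le_opNorm _ _
      _ ≤ L * ‖t • v‖ * ‖v‖ := by
          gcongr
          simpa [dist_eq_norm] using hL.dist_le_mul (a + t • v) a
      _ = L * t * ‖v‖ ^ 2 := by rw [norm_smul, Real.norm_of_nonneg ht.1]; ring
  have hB : ∀ t : ℝ, HasDerivAt (fun t : ℝ => L / 2 * t ^ 2 * ‖v‖ ^ 2) (L * t * ‖v‖ ^ 2) t :=
    fun t => (((hasDerivAt_pow 2 t).const_mul ((L : ℝ) / 2)).mul_const (‖v‖ ^ 2)).congr_deriv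
      (by simp only [Nat.cast_ofNat, Nat.add_one_sub_one, pow_one]; ring)
  simpa using image_norm_le_of_norm_deriv_right_le_deriv_boundary
    (fun t _ => (hderiv t).continuousAt.continuousWithinAt)
    (fun t _ => (hderiv t).hasDerivWithinAt) (by simp) hB hbound
    (Set.right_mem_Icc.2 zero_le_one)

section InnerProductSpace

variable {E : Type*} [NormedAddCommGroup E] [InnerProductSpace ℝ E] [CompleteSpace E]

theorem abs_sub_sub_inner_le_of_lipschitzWith_gradient {f : E → ℝ}
    {f' : E → E} {L : NNReal} (hf : ∀ x, HasGradientAt f (f' x) x) (hL : LipschitzWith L f')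
    (a v : E) : |f (a + v) - f a - ⟪f' a, v⟫| ≤ L / 2 * ‖v‖ ^ 2 := by
  simpa using norm_sub_sub_fderiv_le_of_lipschitzWith (fun x => (hf x).hasFDerivAt)
    (LipschitzWith.of_dist_le_mul fun x y => by
      simpa [dist_eq_norm, ← map_sub] using hL.dist_le_mul x y) a v

variable {Ω : Type*} [MeasurableSpace Ω] {μ : Measure Ω} [IsProbabilityMeasure μ]

theorem integral_norm_sub_sq_eq {X : Ω → E} (hX : MemLp X 2 μ) (c : E) :
    ∫ ω, ‖X ω - c‖ ^ 2 ∂μ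
      = ∫ ω, ‖X ω - ∫ ω', X ω' ∂μ‖ ^ 2 ∂μ + ‖∫ ω, X ω ∂μ - c‖ ^ 2 := by
  set m := ∫ ω, X ω ∂μ
  have hX1 : Integrable X μ := hX.integrable one_le_two
  have hcent : Integrable (fun ω => X ω - m) μ := hX1.sub (integrable_const m)
  have hcent2 : Integrable (fun ω => ‖X ω - m‖ ^ 2) μ :=
    (memLp_two_iff_integrable_sq_norm hcent.1).1 (hX.sub (memLp_const m))
  calc ∫ ω, ‖X ω - c‖ ^ 2 ∂μ
      = ∫ ω, (‖m - c‖ ^ 2 + 2 * ⟪m - c, X ω - m⟫ + ‖X ω - m‖ ^ 2) ∂μ := by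
        congr 1 with ω
        rw [← norm_add_sq_real, sub_add_sub_cancel']
    _ = ‖m - c‖ ^ 2 + 2 * ⟪m - c, ∫ ω, (X ω - m) ∂μ⟫ + ∫ ω, ‖X ω - m‖ ^ 2 ∂μ := by
        rw [integral_add _ hcent2, integral_add (integrable_const _),
          integral_const_mul, integral_inner hcent]
        · simp
        · exact (hcent.const_inner _).const_mul 2
        · exact (integrable_const _).add ((hcent.const_inner _).const_mul 2)
    _ = ∫ ω, ‖X ω - m‖ ^ 2 ∂μ + ‖m - c‖ ^ 2 := by
        rw [integral_sub hX1 (integrable_const m)]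
        simp [m, add_comm]

theorem abs_integral_sub_sub_inner_le_of_lipschitzWith_gradient {f : E → ℝ} {f' : E → E}
    {L : NNReal} (hf : ∀ x, HasGradientAt f (f' x) x) (hL : LipschitzWith L f') (a : E)
    {Z : Ω → E} (hZ : MemLp Z 2 μ) :
    |∫ ω, f (a + Z ω) ∂μ - f a - ⟪f' a, ∫ ω, Z ω ∂μ⟫| ≤ L / 2 * ∫ ω, ‖Z ω‖ ^ 2 ∂μ := by
  have hZ1 : Integrable Z μ := hZ.integrable one_le_two
  have hZ2 : Integrable (fun ω => ‖Z ω‖ ^ 2) μ := (memLp_two_iff_integrable_sq_norm hZ.1).1 hZ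
  have hf_cont : Continuous f :=
    continuous_iff_continuousAt.2 fun x => (hf x).hasFDerivAt.continuousAt
  have hrem : ∀ ω, |f (a + Z ω) - f a - ⟪f' a, Z ω⟫| ≤ L / 2 * ‖Z ω‖ ^ 2 := fun ω =>
    abs_sub_sub_inner_le_of_lipschitzWith_gradient hf hL a (Z ω)
  have hrem_int : Integrable (fun ω => f (a + Z ω) - f a - ⟪f' a, Z ω⟫) μ := by
    refine (hZ2.const_mul _).mono' ?_ (ae_of_all _ hrem)
    exact ((hf_cont.comp_aestronglyMeasurable (hZ.1.const_add a)).sub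
      aestronglyMeasurable_const).sub (hZ1.const_inner (f' a)).1
  have hfZ_int : Integrable (fun ω => f (a + Z ω)) μ := by
    refine ((hrem_int.add (integrable_const (f a))).add (hZ1.const_inner (f' a))).congr
      (ae_of_all _ fun ω => ?_)
    simp only [Pi.add_apply]
    ring
  calc |∫ ω, f (a + Z ω) ∂μ - f a - ⟪f' a, ∫ ω, Z ω ∂μ⟫|
      = ‖∫ ω, (f (a + Z ω) - f a - ⟪f' a, Z ω⟫) ∂μ‖ := by
        rw [integral_sub ?_ (hZ1.const_inner _), integral_sub hfZ_int (integrable_const _),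
          integral_inner hZ1]
        · simp
        · exact hfZ_int.sub (integrable_const _)
    _ ≤ ∫ ω, L / 2 * ‖Z ω‖ ^ 2 ∂μ := norm_integral_le_of_norm_le (hZ2.const_mul _) (ae_of_all _ hrem)
    _ = L / 2 * ∫ ω, ‖Z ω‖ ^ 2 ∂μ := integral_const_mul _ _

theorem abs_integral_add_smul_sub_sub_le {f : E → ℝ} {f' : E → E} {L : NNReal}
    (hf : ∀ x, HasGradientAt f (f' x) x) (hL : LipschitzWith L f') (a : E) {X : Ω → E}
    (hX : MemLp X 2 μ) (c : E) (t : ℝ) :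
    |∫ ω, f (a + t • (X ω - c)) ∂μ - f a - t * ⟪f' a, ∫ ω, X ω ∂μ - c⟫|
      ≤ L / 2 * t ^ 2 * (∫ ω, ‖X ω - ∫ ω', X ω' ∂μ‖ ^ 2 ∂μ + ‖∫ ω, X ω ∂μ - c‖ ^ 2) := by
  have hZ : MemLp (fun ω => t • (X ω - c)) 2 μ := (hX.sub (memLp_const c)).const_smul t
  have := abs_integral_sub_sub_inner_le_of_lipschitzWith_gradient hf hL a hZ
  simp_rw [norm_smul, mul_pow, Real.norm_eq_abs, sq_abs] at this
  rwa [integral_smul, integral_sub (hX.integrable one_le_two) (integrable_const c),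
    integral_const_mul, integral_norm_sub_sq_eq hX c, inner_smul_right, integral_const,
    probReal_univ, one_smul, ← mul_assoc] at this

end InnerProductSpace

theorem ContinuousLinearMap.le_of_mem_convexHull_closure {E : Type*} [AddCommGroup E]
    [Module ℝ E] [TopologicalSpace E] (ℓ : E →L[ℝ] ℝ) {s : Set E} {c : ℝ}
    (hs : ∀ m ∈ s, ℓ m ≤ c) {x : E} (hx : x ∈ convexHull ℝ (closure s)) : ℓ x ≤ c :=
  convexHull_min (closure_minimal hs (isClosed_le ℓ.continuous continuous_const))
    (convex_halfSpace_le ℓ.toLinearMap.isLinear c) hx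

theorem abs_ciSup_sub_le_of_abs_sub_mul_le {ι : Type*} [Nonempty ι] {a b : ι → ℝ}
    {c t β B : ℝ} (ht : 0 ≤ t) (hab : ∀ i, |a i - c - t * (b i - β)| ≤ B) (hb : ∀ i, b i ≤ β)
    (hβ : β ≤ ⨆ i, b i) : |(⨆ i, a i) - c| ≤ B := by
  have ha_le : ∀ i, a i ≤ c + B := fun i => by
    nlinarith [(abs_le.1 (hab i)).2, mul_le_mul_of_nonneg_left (hb i) ht]
  have ha_bdd : BddAbove (Set.range a) := ⟨c + B, Set.forall_mem_range.2 ha_le⟩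
  have hlower : c - B ≤ ⨆ i, a i := le_of_forall_pos_le_add fun ε hε => by
    have hδ : 0 < ε / (t + 1) := by positivity
    have htδ : t * (ε / (t + 1)) ≤ ε := by
      rw [mul_div_assoc', div_le_iff₀ (by positivity)]
      nlinarith
    obtain ⟨i, hi⟩ := exists_lt_of_lt_ciSup (show β - ε / (t + 1) < ⨆ i, b i by linarith)
    nlinarith [(abs_le.1 (hab i)).1, le_ciSup ha_bdd i, mul_le_mul_of_nonneg_left hi.le ht]
  exact abs_sub_le_iff.2 ⟨by linarith [ciSup_le ha_le], by linarith⟩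

theorem stmt6_general {Ω Θ : Type*} [MeasurableSpace Ω] [Nonempty Θ] {d : ℕ}
    (P : Θ → Measure Ω) (hP : ∀ θ, IsProbabilityMeasure (P θ))
    (X : Ω → EuclideanSpace ℝ (Fin d))
    (hInt : ∀ θ, Integrable X (P θ))
    (hInt2 : ∀ θ, Integrable (fun ω => ‖X ω‖ ^ 2) (P θ))
    (hBddV : BddAbove (Set.range fun θ =>
      ∫ ω, ‖X ω - ∫ ω', X ω' ∂(P θ)‖ ^ 2 ∂(P θ)))
    (PP : Set (EuclideanSpace ℝ (Fin d)))
    (hPPdef : PP = convexHull ℝ (closure {μ | ∃ θ, μ = ∫ ω, X ω ∂(P θ)}))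
    (hPPbdd : Bornology.IsBounded PP)
    (φ : EuclideanSpace ℝ (Fin d) → ℝ) (Dφ : EuclideanSpace ℝ (Fin d) → EuclideanSpace ℝ (Fin d))
    (hDφ : ∀ x, HasGradientAt φ (Dφ x) x)
    (lam : NNReal) (hlam : LipschitzWith lam Dφ)
    (y : EuclideanSpace ℝ (Fin d)) (n : ℕ)
    (μstar : EuclideanSpace ℝ (Fin d)) (hμstar : μstar ∈ PP)
    (hμmax : ∀ m ∈ PP, ⟪m, Dφ y⟫ ≤ ⟪μstar, Dφ y⟫) :
    |SE P (fun ω => φ (y + (n : ℝ)⁻¹ • (X ω - μstar))) - φ y|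
      ≤ lam * ((⨆ θ, ∫ ω, ‖X ω - ∫ ω', X ω' ∂(P θ)‖ ^ 2 ∂(P θ)) +
          (Metric.diam PP) ^ 2) / (2 * n ^ 2) := by
  have hmean_mem : ∀ θ, ∫ ω, X ω ∂(P θ) ∈ PP := fun θ =>
    hPPdef ▸ subset_convexHull ℝ _ (subset_closure ⟨θ, rfl⟩)
  have hbdd : BddAbove (Set.range fun θ => ⟪∫ ω, X ω ∂(P θ), Dφ y⟫) :=
    ⟨_, Set.forall_mem_range.2 fun θ => hμmax _ (hmean_mem θ)⟩
  have hμstar_le : ⟪μstar, Dφ y⟫ ≤ ⨆ θ, ⟪∫ ω, X ω ∂(P θ), Dφ y⟫ := by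
    refine (innerSLFlip ℝ (Dφ y)).le_of_mem_convexHull_closure ?_ (hPPdef ▸ hμstar)
    rintro _ ⟨θ, rfl⟩
    exact le_ciSup hbdd θ
  refine abs_ciSup_sub_le_of_abs_sub_mul_le (t := (n : ℝ)⁻¹) (by positivity) (fun θ => ?_)
    (fun θ => hμmax _ (hmean_mem θ)) hμstar_le
  have := hP θ
  have hX : MemLp X 2 (P θ) := (memLp_two_iff_integrable_sq_norm (hInt θ).1).2 (hInt2 θ)
  have hdist : ‖∫ ω, X ω ∂(P θ) - μstar‖ ≤ Metric.diam PP := by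
    simpa [dist_eq_norm] using Metric.dist_le_diam_of_mem hPPbdd (hmean_mem θ) hμstar
  rw [← inner_sub_left, real_inner_comm]
  calc _ ≤ lam / 2 * ((n : ℝ)⁻¹) ^ 2 * (∫ ω, ‖X ω - ∫ ω', X ω' ∂(P θ)‖ ^ 2 ∂(P θ)
        + ‖∫ ω, X ω ∂(P θ) - μstar‖ ^ 2) :=
      abs_integral_add_smul_sub_sub_le hDφ hlam y hX μstar _
    _ ≤ lam / 2 * ((n : ℝ)⁻¹) ^ 2 * ((⨆ θ, ∫ ω, ‖X ω - ∫ ω', X ω' ∂(P θ)‖ ^ 2 ∂(P θ))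
        + (Metric.diam PP) ^ 2) := by
      gcongr
      exact le_ciSup hBddV θ
    _ = _ := by ring

/-- One-step estimate: if `μ* ∈ 𝒫` maximizes `μ ↦ μ·Dφ(y)` over the convex hull `𝒫` of the
closure of the possible means of `X`, then
`|𝔼[φ(y + (X − μ*)/n)] − φ(y)| ≤ λ(sup_θ E_θ|X − E_θX|² + diam²𝒫)/(2n²)`. -/
theorem stmt6 {Ω Θ : Type*} [MeasurableSpace Ω] [Nonempty Θ] {d : ℕ}
    (P : Θ → Measure Ω) (hP : ∀ θ, IsProbabilityMeasure (P θ))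
    (X : Ω → EuclideanSpace ℝ (Fin d))
    (hInt : ∀ θ, Integrable X (P θ))
    (hInt2 : ∀ θ, Integrable (fun ω => ‖X ω‖ ^ 2) (P θ))
    (hBddV : BddAbove (Set.range fun θ =>
      ∫ ω, ‖X ω - ∫ ω', X ω' ∂(P θ)‖ ^ 2 ∂(P θ)))
    (PP : Set (EuclideanSpace ℝ (Fin d)))
    (hPPdef : PP = convexHull ℝ (closure {μ | ∃ θ, μ = ∫ ω, X ω ∂(P θ)}))
    (hPPbdd : Bornology.IsBounded PP)
    (φ : EuclideanSpace ℝ (Fin d) → ℝ) (Dφ : EuclideanSpace ℝ (Fin d) → EuclideanSpace ℝ (Fin d))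
    (hDφ : ∀ x, HasGradientAt φ (Dφ x) x)
    (lam : NNReal) (hlam : LipschitzWith lam Dφ)
    (y : EuclideanSpace ℝ (Fin d)) (n : ℕ) (hn : 1 ≤ n)
    (μstar : EuclideanSpace ℝ (Fin d)) (hμstar : μstar ∈ PP)
    (hμmax : ∀ m ∈ PP, ⟪m, Dφ y⟫ ≤ ⟪μstar, Dφ y⟫) :
    |SE P (fun ω => φ (y + (n : ℝ)⁻¹ • (X ω - μstar))) - φ y|
      ≤ lam * ((⨆ θ, ∫ ω, ‖X ω - ∫ ω', X ω' ∂(P θ)‖ ^ 2 ∂(P θ)) +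
          (Metric.diam PP) ^ 2) / (2 * n ^ 2) :=
  stmt6_general P hP X hInt hInt2 hBddV PP hPPdef hPPbdd φ Dφ hDφ lam hlam y n μstar hμstar hμmax
end

section
/- Let φ : ℝ → ℝ be Lipschitz with Lipschitz constant ‖φ'‖, let t > 0 and x ∈ ℝ, and let Z be a standard Gaussian random variable with (classical) expectation E. Define f(w) := (1/√t) e^{(w−x)²/(2t)} ∫_{−∞}^{(w−x)/√t} e^{−y²/2} (φ(x + √t y) − E[φ(x + √t Z)]) dy for w ∈ ℝ. Then f is differentiable on ℝ and f' is Lipschitz with constant at most (2/t)‖φ'‖. -/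
/-!
Substituting `u = (w - x) / √t` gives `f w = t^{-1/2} g u` with
`g u = e^{u²/2} ∫_{-∞}^u e^{-y²/2} h y dy` and `h y = φ (x + √t y) - c`, and `g' = u g + h`.
Hence `f' w = t⁻¹ (u g u + h u)`, and it suffices that `u ↦ u g u` is Lipschitz with the
constant `√t ‖φ'‖` of `h`, i.e. that `|(1 + u²) g u + u h u| ≤ √t ‖φ'‖`. As `h` has Gaussian mean
zero, `∫_{-∞}^u = -∫_u^∞`; a convex combination of the two representations whose weights come
from the Mills-ratio bounds `∓ u e^{-u²/2} / (1 + u²) ≤ ∫_{-∞}^u, ∫_u^∞ e^{-y²/2}` cancels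
the term `u h u` exactly, and the remaining error is controlled by the Lipschitz constant.
-/

open MeasureTheory Set Real Filter Topology ProbabilityTheory
open scoped NNReal

namespace SteinGaussian

noncomputable def gaussWeight (y : ℝ) : ℝ := exp (-y ^ 2 / 2)

lemma gaussWeight_pos (y : ℝ) : 0 < gaussWeight y := exp_pos _

lemma gaussWeight_eq_exp_neg_mul_sq : gaussWeight = fun y => exp (-(1 / 2) * y ^ 2) := by
  ext y; unfold gaussWeight; ring_nf

lemma exp_sq_div_two_mul_gaussWeight (u : ℝ) : exp (u ^ 2 / 2) * gaussWeight u = 1 := by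
  rw [gaussWeight, ← exp_add, neg_div, add_neg_cancel, exp_zero]

lemma continuous_gaussWeight : Continuous gaussWeight := by
  unfold gaussWeight; fun_prop

lemma hasDerivAt_gaussWeight (y : ℝ) : HasDerivAt gaussWeight (-y * gaussWeight y) y := by
  have hq : HasDerivAt (fun y : ℝ => -y ^ 2 / 2) (-y) y :=
    ((hasDerivAt_pow 2 y).neg.div_const 2).congr_deriv (by push_cast; ring)
  exact hq.exp.congr_deriv (by unfold gaussWeight; ring)

lemma tendsto_gaussWeight_cocompact : Tendsto gaussWeight (cocompact ℝ) (𝓝 0) := by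
  simpa [gaussWeight_eq_exp_neg_mul_sq] using
    tendsto_rpow_abs_mul_exp_neg_mul_sq_cocompact (half_pos one_pos) 0

lemma integrable_gaussWeight : Integrable gaussWeight := by
  rw [gaussWeight_eq_exp_neg_mul_sq]; exact integrable_exp_neg_mul_sq (half_pos one_pos)

lemma integrable_mul_gaussWeight : Integrable fun y => y * gaussWeight y := by
  rw [gaussWeight_eq_exp_neg_mul_sq]; exact integrable_mul_exp_neg_mul_sq (half_pos one_pos)

lemma integral_gaussWeight : ∫ y, gaussWeight y = √(2 * π) := by
  rw [gaussWeight_eq_exp_neg_mul_sq, integral_gaussian]; congr 1; ring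

lemma integral_Iic_mul_gaussWeight (u : ℝ) : ∫ y in Iic u, y * gaussWeight y = -gaussWeight u := by
  simpa using integral_Iic_of_hasDerivAt_of_tendsto' (f := fun y => -gaussWeight y)
    (fun y _ => (hasDerivAt_gaussWeight y).neg.congr_deriv (by ring))
    integrable_mul_gaussWeight.integrableOn
    (tendsto_gaussWeight_cocompact.mono_left atBot_le_cocompact).neg

lemma integral_Ioi_mul_gaussWeight (u : ℝ) : ∫ y in Ioi u, y * gaussWeight y = gaussWeight u := by
  simpa using integral_Ioi_of_hasDerivAt_of_tendsto' (f := fun y => -gaussWeight y)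
    (fun y _ => (hasDerivAt_gaussWeight y).neg.congr_deriv (by ring))
    integrable_mul_gaussWeight.integrableOn
    (tendsto_gaussWeight_cocompact.mono_left atTop_le_cocompact).neg

noncomputable def millsLowerBound (y : ℝ) : ℝ := y * gaussWeight y / (1 + y ^ 2)

lemma abs_millsLowerBound_le (y : ℝ) : |millsLowerBound y| ≤ gaussWeight y := by
  have hy : |y| ≤ 1 + y ^ 2 := by nlinarith [sq_nonneg (|y| - 1), sq_abs y]
  rw [millsLowerBound, abs_div, abs_mul, abs_of_pos (gaussWeight_pos y),
    abs_of_pos (by positivity : (0 : ℝ) < 1 + y ^ 2), div_le_iff₀ (by positivity)]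
  nlinarith [mul_le_mul_of_nonneg_right hy (gaussWeight_pos y).le]

lemma tendsto_millsLowerBound_cocompact : Tendsto millsLowerBound (cocompact ℝ) (𝓝 0) :=
  squeeze_zero_norm (fun y => abs_millsLowerBound_le y) tendsto_gaussWeight_cocompact

lemma hasDerivAt_millsLowerBound (y : ℝ) :
    HasDerivAt millsLowerBound (2 * (gaussWeight y / (1 + y ^ 2) ^ 2) - gaussWeight y) y := by
  have hden : HasDerivAt (fun y : ℝ => 1 + y ^ 2) (2 * y) y :=
    ((hasDerivAt_pow 2 y).const_add 1).congr_deriv (by push_cast; ring)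
  have := ((hasDerivAt_id y).mul (hasDerivAt_gaussWeight y)).div hden (by positivity)
  refine this.congr_deriv ?_
  simp only [id_eq, Pi.mul_apply]
  field_simp
  ring

lemma integrable_gaussWeight_div_one_add_sq_sq :
    Integrable fun y => gaussWeight y / (1 + y ^ 2) ^ 2 := by
  refine integrable_gaussWeight.mono'
    (continuous_gaussWeight.div (by fun_prop) (fun y => by positivity)).aestronglyMeasurable
    (Eventually.of_forall fun y => ?_)
  rw [norm_div, Real.norm_of_nonneg (gaussWeight_pos y).le, norm_pow,
    Real.norm_of_nonneg (by positivity)]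
  exact div_le_self (gaussWeight_pos y).le (one_le_pow₀ (by nlinarith [sq_nonneg y]))

lemma integrable_deriv_millsLowerBound :
    Integrable fun y => 2 * (gaussWeight y / (1 + y ^ 2) ^ 2) - gaussWeight y :=
  (integrable_gaussWeight_div_one_add_sq_sq.const_mul 2).sub integrable_gaussWeight

lemma millsLowerBound_le_integral_Ioi (u : ℝ) :
    millsLowerBound u ≤ ∫ y in Ioi u, gaussWeight y := by
  have hftc := integral_Ioi_of_hasDerivAt_of_tendsto' (a := u)
    (fun y _ => hasDerivAt_millsLowerBound y)
    integrable_deriv_millsLowerBound.integrableOn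
    (tendsto_millsLowerBound_cocompact.mono_left atTop_le_cocompact)
  rw [integral_sub (integrable_gaussWeight_div_one_add_sq_sq.const_mul 2).integrableOn
    integrable_gaussWeight.integrableOn, integral_const_mul] at hftc
  have : 0 ≤ ∫ y in Ioi u, gaussWeight y / (1 + y ^ 2) ^ 2 :=
    setIntegral_nonneg measurableSet_Ioi fun y _ => by have := gaussWeight_pos y; positivity
  linarith

lemma neg_millsLowerBound_le_integral_Iic (u : ℝ) :
    -millsLowerBound u ≤ ∫ y in Iic u, gaussWeight y := by
  have hftc := integral_Iic_of_hasDerivAt_of_tendsto' (a := u)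
    (fun y _ => hasDerivAt_millsLowerBound y)
    integrable_deriv_millsLowerBound.integrableOn
    (tendsto_millsLowerBound_cocompact.mono_left atBot_le_cocompact)
  rw [integral_sub (integrable_gaussWeight_div_one_add_sq_sq.const_mul 2).integrableOn
    integrable_gaussWeight.integrableOn, integral_const_mul] at hftc
  have : 0 ≤ ∫ y in Iic u, gaussWeight y / (1 + y ^ 2) ^ 2 :=
    setIntegral_nonneg measurableSet_Iic fun y _ => by have := gaussWeight_pos y; positivity
  linarith

/-- With `α := (Q - m) / (P + Q) ∈ [0, 1]`, split `A = α A - (1 - α) (-A)`: the weights are chosen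
so that the `a`-terms cancel against `u a e`, and the two error bounds then combine to `K e`. -/
lemma abs_one_add_sq_mul_add_le {P Q A a u e m K : ℝ} (hPQ : 0 < P + Q) (hmQ : m ≤ Q)
    (hmP : -m ≤ P) (hm : (1 + u ^ 2) * m = u * e)
    (hA : |A - a * P| ≤ K * (u * P + e)) (hB : |-A - a * Q| ≤ K * (e - u * Q)) :
    |(1 + u ^ 2) * A + u * a * e| ≤ K * e := by
  set α := (Q - m) / (P + Q)
  have hα0 : 0 ≤ α := div_nonneg (by linarith) hPQ.le
  have hα1 : 0 ≤ 1 - α := sub_nonneg.2 ((div_le_one hPQ).2 (by linarith))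
  have hαPQ : α * P - (1 - α) * Q = -m := by
    linear_combination div_mul_cancel₀ (Q - m) hPQ.ne'
  have hsplit : (1 + u ^ 2) * A + u * a * e
      = (1 + u ^ 2) * (α * (A - a * P) - (1 - α) * (-A - a * Q)) := by
    linear_combination (1 + u ^ 2) * a * hαPQ - a * hm
  rw [hsplit, abs_mul, abs_of_pos (by positivity : (0 : ℝ) < 1 + u ^ 2)]
  calc (1 + u ^ 2) * |α * (A - a * P) - (1 - α) * (-A - a * Q)|
      ≤ (1 + u ^ 2) * (α * |A - a * P| + (1 - α) * |-A - a * Q|) := by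
        gcongr
        refine (abs_sub _ _).trans_eq ?_
        rw [abs_mul, abs_mul, abs_of_nonneg hα0, abs_of_nonneg hα1]
    _ ≤ (1 + u ^ 2) * (α * (K * (u * P + e)) + (1 - α) * (K * (e - u * Q))) := by gcongr
    _ = K * e := by linear_combination K * u * (1 + u ^ 2) * hαPQ - K * u * hm

lemma integrable_gaussWeight_mul_abs_sub (u : ℝ) : Integrable fun y => gaussWeight y * |y - u| :=
  (integrable_mul_gaussWeight.sub (integrable_gaussWeight.const_mul u)).norm.congr
    (Eventually.of_forall fun y => by
      simp only [Pi.sub_apply]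
      rw [Real.norm_eq_abs, ← sub_mul, abs_mul, abs_of_pos (gaussWeight_pos y), mul_comm])

lemma integral_Iic_gaussWeight_mul_abs_sub (u : ℝ) :
    ∫ y in Iic u, gaussWeight y * |y - u| = u * (∫ y in Iic u, gaussWeight y) + gaussWeight u := by
  rw [setIntegral_congr_fun measurableSet_Iic (g := fun y => u * gaussWeight y - y * gaussWeight y)
      fun y hy => by rw [abs_of_nonpos (sub_nonpos.2 hy)]; ring,
    integral_sub (integrable_gaussWeight.const_mul u).integrableOn
      integrable_mul_gaussWeight.integrableOn,
    integral_const_mul, integral_Iic_mul_gaussWeight, sub_neg_eq_add]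

lemma integral_Ioi_gaussWeight_mul_abs_sub (u : ℝ) :
    ∫ y in Ioi u, gaussWeight y * |y - u| = gaussWeight u - u * ∫ y in Ioi u, gaussWeight y := by
  rw [setIntegral_congr_fun measurableSet_Ioi (g := fun y => y * gaussWeight y - u * gaussWeight y)
      fun y hy => by rw [abs_of_pos (sub_pos.2 hy)]; ring,
    integral_sub integrable_mul_gaussWeight.integrableOn
      (integrable_gaussWeight.const_mul u).integrableOn,
    integral_const_mul, integral_Ioi_mul_gaussWeight]

lemma hasDerivAt_integral_Iic {F : ℝ → ℝ} (hF : Continuous F) (hFi : Integrable F) (v : ℝ) :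
    HasDerivAt (fun v => ∫ y in Iic v, F y) (F v) v := by
  have hsplit : (fun v => ∫ y in Iic v, F y) = fun v => (∫ y in Iic 0, F y) + ∫ y in 0..v, F y := by
    ext v
    rw [← intervalIntegral.integral_Iic_sub_Iic hFi.integrableOn hFi.integrableOn]
    ring
  rw [hsplit]
  exact (intervalIntegral.integral_hasDerivAt_right hFi.intervalIntegrable
    hF.stronglyMeasurable.stronglyMeasurableAtFilter hF.continuousAt).const_add _

section Lipschitz

variable {h : ℝ → ℝ} {K : ℝ≥0}

lemma integrable_gaussWeight_mul (hh : LipschitzWith K h) :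
    Integrable fun y => gaussWeight y * h y := by
  refine ((integrable_gaussWeight.const_mul |h 0|).add
    (integrable_mul_gaussWeight.norm.const_mul K)).mono'
    (continuous_gaussWeight.mul hh.continuous).aestronglyMeasurable
    (Eventually.of_forall fun y => ?_)
  have hgrowth : |h y| ≤ |h 0| + K * |y| := by
    have := hh.dist_le_mul y 0
    rw [Real.dist_eq, Real.dist_eq, sub_zero] at this
    linarith [abs_sub_abs_le_abs_sub (h y) (h 0)]
  simp only [Pi.add_apply, norm_mul, Real.norm_eq_abs, abs_of_pos (gaussWeight_pos y)]
  nlinarith [mul_le_mul_of_nonneg_left hgrowth (gaussWeight_pos y).le]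

lemma setIntegral_gaussWeight_mul_sub (hh : LipschitzWith K h) (s : Set ℝ) (u : ℝ) :
    ∫ y in s, gaussWeight y * (h y - h u) =
      (∫ y in s, gaussWeight y * h y) - h u * ∫ y in s, gaussWeight y := by
  simp only [mul_sub]
  rw [integral_sub (integrable_gaussWeight_mul hh).integrableOn
    (integrable_gaussWeight.mul_const _).integrableOn, integral_mul_const, mul_comm]

lemma abs_setIntegral_gaussWeight_mul_sub_le (hh : LipschitzWith K h) (s : Set ℝ) (u : ℝ) :
    |∫ y in s, gaussWeight y * (h y - h u)| ≤ K * ∫ y in s, gaussWeight y * |y - u| := by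
  rw [← integral_const_mul]
  refine (abs_integral_le_integral_abs).trans (integral_mono_of_nonneg
    (Eventually.of_forall fun y => abs_nonneg _)
    ((integrable_gaussWeight_mul_abs_sub u).const_mul K).integrableOn
    (Eventually.of_forall fun y => ?_))
  have := hh.dist_le_mul y u
  rw [Real.dist_eq, Real.dist_eq] at this
  simp only [abs_mul, abs_of_pos (gaussWeight_pos y), mul_left_comm (K : ℝ)]
  exact mul_le_mul_of_nonneg_left this (gaussWeight_pos y).le

/-- The solution of the standardized Stein equation `g' u - u g u = h u`. -/
noncomputable def steinSolution (h : ℝ → ℝ) (u : ℝ) : ℝ :=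
  exp (u ^ 2 / 2) * ∫ y in Iic u, gaussWeight y * h y

lemma hasDerivAt_steinSolution (hh : LipschitzWith K h) (u : ℝ) :
    HasDerivAt (steinSolution h) (u * steinSolution h u + h u) u := by
  have hexp : HasDerivAt (fun v : ℝ => exp (v ^ 2 / 2)) (exp (u ^ 2 / 2) * u) u :=
    ((hasDerivAt_pow 2 u).div_const 2).exp.congr_deriv (by push_cast; ring)
  have := hexp.mul (hasDerivAt_integral_Iic (continuous_gaussWeight.mul hh.continuous)
    (integrable_gaussWeight_mul hh) u)
  refine this.congr_deriv ?_
  simp only [steinSolution, Pi.mul_apply]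
  rw [← mul_assoc (exp _), exp_sq_div_two_mul_gaussWeight]
  ring

lemma abs_one_add_sq_mul_steinSolution_add_le (hh : LipschitzWith K h)
    (hmean : ∫ y, gaussWeight y * h y = 0) (u : ℝ) :
    |(1 + u ^ 2) * steinSolution h u + u * h u| ≤ (K : ℝ) := by
  have hint := integrable_gaussWeight_mul hh
  have hsum : ∀ {F : ℝ → ℝ}, Integrable F → (∫ y in Iic u, F y) + ∫ y in Ioi u, F y = ∫ y, F y :=
    fun hF => intervalIntegral.integral_Iic_add_Ioi hF.integrableOn hF.integrableOn
  have hA := abs_setIntegral_gaussWeight_mul_sub_le hh (Iic u) u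
  have hB := abs_setIntegral_gaussWeight_mul_sub_le hh (Ioi u) u
  rw [setIntegral_gaussWeight_mul_sub hh, integral_Iic_gaussWeight_mul_abs_sub] at hA
  rw [setIntegral_gaussWeight_mul_sub hh, integral_Ioi_gaussWeight_mul_abs_sub,
    eq_neg_of_add_eq_zero_right ((hsum hint).trans hmean)] at hB
  have hbound := abs_one_add_sq_mul_add_le
    (by rw [hsum integrable_gaussWeight, integral_gaussWeight]; positivity)
    (millsLowerBound_le_integral_Ioi u) (neg_millsLowerBound_le_integral_Iic u)
    (by rw [millsLowerBound]; field_simp) hA hB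
  have hexp := exp_sq_div_two_mul_gaussWeight u
  calc |(1 + u ^ 2) * steinSolution h u + u * h u|
      = exp (u ^ 2 / 2) * |(1 + u ^ 2) * (∫ y in Iic u, gaussWeight y * h y)
          + u * h u * gaussWeight u| := by
        rw [← abs_of_pos (exp_pos (u ^ 2 / 2)), ← abs_mul, steinSolution]
        congr 1
        linear_combination -u * h u * hexp
    _ ≤ exp (u ^ 2 / 2) * (K * gaussWeight u) := by gcongr
    _ = K := by linear_combination K * hexp

lemma lipschitzWith_mul_steinSolution (hh : LipschitzWith K h)
    (hmean : ∫ y, gaussWeight y * h y = 0) : LipschitzWith K fun u => u * steinSolution h u := by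
  refine lipschitzOnWith_univ.1 (convex_univ.lipschitzOnWith_of_nnnorm_hasDerivWithin_le
    (f' := fun u => (1 + u ^ 2) * steinSolution h u + u * h u)
    (fun u _ =>
      (((hasDerivAt_id u).mul (hasDerivAt_steinSolution hh u)).congr_deriv ?_).hasDerivWithinAt)
    fun u _ => ?_)
  · simp only [id_eq]; ring
  · rw [← NNReal.coe_le_coe, coe_nnnorm, Real.norm_eq_abs]
    exact abs_one_add_sq_mul_steinSolution_add_le hh hmean u

lemma lipschitzWith_deriv_steinSolution (hh : LipschitzWith K h)
    (hmean : ∫ y, gaussWeight y * h y = 0) :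
    LipschitzWith (2 * K) fun u => u * steinSolution h u + h u := by
  simpa only [two_mul] using (lipschitzWith_mul_steinSolution hh hmean).add hh

end Lipschitz

lemma integral_gaussianReal_eq (ψ : ℝ → ℝ) :
    ∫ z, ψ z ∂gaussianReal 0 1 = (√(2 * π))⁻¹ * ∫ y, gaussWeight y * ψ y := by
  rw [integral_gaussianReal_eq_integral_smul one_ne_zero, ← integral_const_mul]
  congr 1 with y
  simp [gaussianPDFReal, gaussWeight, mul_assoc]

lemma integral_gaussWeight_mul_sub_integral_gaussianReal {ψ : ℝ → ℝ}
    (hψ : Integrable fun y => gaussWeight y * ψ y) :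
    ∫ y, gaussWeight y * (ψ y - ∫ z, ψ z ∂gaussianReal 0 1) = 0 := by
  simp only [mul_sub]
  rw [integral_sub hψ (integrable_gaussWeight.mul_const _), integral_mul_const,
    integral_gaussWeight, integral_gaussianReal_eq, mul_inv_cancel_left₀ (by positivity), sub_self]

end SteinGaussian

lemma LipschitzWith.comp_const_add_mul {φ : ℝ → ℝ} {L : ℝ≥0} (hφ : LipschitzWith L φ) (x : ℝ)
    {s : ℝ} (hs : 0 ≤ s) : LipschitzWith (s.toNNReal * L) fun y => φ (x + s * y) :=
  .of_dist_le_mul fun a b => by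
    have := hφ.dist_le_mul (x + s * a) (x + s * b)
    rw [Real.dist_eq, Real.dist_eq, add_sub_add_left_eq_sub, ← mul_sub, abs_mul,
      abs_of_nonneg hs] at this
    rw [Real.dist_eq, Real.dist_eq, NNReal.coe_mul, Real.coe_toNNReal s hs]
    linarith

open SteinGaussian in
/-- Bound on the second derivative of the solution of the Stein equation
`t f'(w) − (w − x) f(w) = φ(w) − E[φ(x + √t Z)]`: the solution `f` is differentiable and its
derivative is Lipschitz with constant at most `(2/t)‖φ'‖`. -/
theorem stmt10 (φ : ℝ → ℝ) (L : NNReal) (hφ : LipschitzWith L φ) (t x : ℝ) (ht : 0 < t) :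
    let c : ℝ := ∫ z, φ (x + Real.sqrt t * z) ∂(ProbabilityTheory.gaussianReal 0 1)
    let f : ℝ → ℝ := fun w =>
      (1 / Real.sqrt t) * Real.exp ((w - x) ^ 2 / (2 * t)) *
        ∫ y in Set.Iic ((w - x) / Real.sqrt t),
          Real.exp (-y ^ 2 / 2) * (φ (x + Real.sqrt t * y) - c)
    Differentiable ℝ f ∧
      ∀ w₁ w₂ : ℝ, |deriv f w₁ - deriv f w₂| ≤ 2 / t * L * |w₁ - w₂| := by
  intro c f
  set s := √t
  have hs : 0 < s := sqrt_pos.2 ht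
  have hs2 : s ^ 2 = t := sq_sqrt ht.le
  have hψ := hφ.comp_const_add_mul x hs.le
  set h : ℝ → ℝ := fun y => φ (x + s * y) - c
  have hh : LipschitzWith (s.toNNReal * L) h := by simpa using hψ.sub (LipschitzWith.const c)
  have hmean : ∫ y, gaussWeight y * h y = 0 :=
    integral_gaussWeight_mul_sub_integral_gaussianReal (integrable_gaussWeight_mul hψ)
  set D : ℝ → ℝ := fun u => u * steinSolution h u + h u
  have hD : LipschitzWith (2 * (s.toNNReal * L)) D := lipschitzWith_deriv_steinSolution hh hmean
  have hf : ∀ w, HasDerivAt f (s⁻¹ * (D ((w - x) / s) * s⁻¹)) w := by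
    intro w
    have := ((hasDerivAt_steinSolution hh _).comp w
      (((hasDerivAt_id w).sub_const x).div_const s)).const_mul s⁻¹
    refine (this.congr_deriv (by simp [D])).congr_of_eventuallyEq
      (Eventually.of_forall fun w => ?_)
    simp only [f, h, Function.comp_apply, id, steinSolution, gaussWeight]
    rw [div_pow, hs2, one_div, mul_assoc, div_div, mul_comm t 2]
  refine ⟨fun w => (hf w).differentiableAt, fun w₁ w₂ => ?_⟩
  have hDw := hD.dist_le_mul ((w₁ - x) / s) ((w₂ - x) / s)
  rw [Real.dist_eq, Real.dist_eq, ← sub_div, sub_sub_sub_cancel_right, abs_div, abs_of_pos hs,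
    NNReal.coe_mul, NNReal.coe_mul, NNReal.coe_ofNat, Real.coe_toNNReal s hs.le] at hDw
  rw [(hf w₁).deriv, (hf w₂).deriv]
  calc _ = (s ^ 2)⁻¹ * |D ((w₁ - x) / s) - D ((w₂ - x) / s)| := by
        rw [← abs_of_pos (by positivity : (0 : ℝ) < (s ^ 2)⁻¹), ← abs_mul]; congr 1; ring
    _ ≤ (s ^ 2)⁻¹ * (2 * (s * L) * (|w₁ - w₂| / s)) := by gcongr
    _ = 2 / t * L * |w₁ - w₂| := by rw [← hs2]; field_simp
end

section
/- Let φ : ℝ → ℝ be continuously differentiable with bounded derivative, let t > 0 and x ∈ ℝ, and let Z be a standard Gaussian random variable with (classical) expectation E. Define f(w) := (1/√t) e^{(w−x)²/(2t)} ∫_{−∞}^{(w−x)/√t} e^{−y²/2} (φ(x + √t y) − E[φ(x + √t Z)]) dy. Then E[f(x + √t Z)] = −E[φ'(x + √t Z)]; equivalently, E[f(x + √t Z)] = −∂_x V(t,x), where V(t,x) := E[φ(x + √t Z)] is the solution of the heat equation ∂_t V = ½∂²_{xx}V with V(0,·) = φ. -/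
/-!
With `ψ z = φ (x + √t z) - c`, the substitution `w = x + √t z` turns `f` into `(√t)⁻¹ g`, where
`g z = e^{z²/2} ∫_{-∞}^z e^{-y²/2} ψ y dy` is the classical solution of Stein's equation
`g' - z g = ψ`. Under the Gaussian density the factor `e^{z²/2}` cancels, so `E[g(Z)]` is a
multiple of `∫ G`, where `G` is the primitive of `h = e^{-y²/2} ψ`. Since `∫ h = 0`, the primitive
has Gaussian tails, and an integration by parts gives `∫ G = -∫ y h y`, that is
`E[g(Z)] = -E[Z ψ(Z)] = -E[ψ'(Z)]` by Stein's lemma. The second identity is differentiation under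
the integral sign, dominated by the bound on `φ'`.
-/

open MeasureTheory ProbabilityTheory Real Set

lemma abs_le_abs_add_mul_abs_of_abs_deriv_le {ψ : ℝ → ℝ} (hψ : Differentiable ℝ ψ) {C : ℝ}
    (hC : ∀ y, |deriv ψ y| ≤ C) (y : ℝ) : |ψ y| ≤ |ψ 0| + C * |y| := by
  have := convex_univ.norm_image_sub_le_of_norm_deriv_le (fun z _ => hψ z) (fun z _ => hC z)
    (mem_univ 0) (mem_univ y)
  simp only [Real.norm_eq_abs, sub_zero] at this
  linarith [abs_sub_abs_le_abs_sub (ψ y) (ψ 0)]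

lemma integrable_gaussianReal_of_abs_deriv_le {m : ℝ} {v : NNReal} {ψ : ℝ → ℝ}
    (hψ : Differentiable ℝ ψ) {C : ℝ} (hC : ∀ y, |deriv ψ y| ≤ C) :
    Integrable ψ (gaussianReal m v) :=
  ((integrable_const |ψ 0|).add
      (((memLp_id_gaussianReal 1).integrable le_rfl).abs.const_mul C)).mono'
    hψ.continuous.aestronglyMeasurable
    (ae_of_all _ (abs_le_abs_add_mul_abs_of_abs_deriv_le hψ hC))

lemma integral_gaussianReal_zero_one (u : ℝ → ℝ) :
    ∫ z, u z ∂gaussianReal 0 1 = (√(2 * π))⁻¹ * ∫ z, exp (-z ^ 2 / 2) * u z := by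
  rw [integral_gaussianReal_eq_integral_smul one_ne_zero, ← integral_const_mul]
  congr 1
  funext z
  simp [gaussianPDFReal_def, mul_assoc]

lemma integrable_quadratic_mul_exp_neg_mul_sq {b : ℝ} (hb : 0 < b) (A B D : ℝ) :
    Integrable fun y : ℝ => (A + B * |y| + D * y ^ 2) * exp (-b * y ^ 2) := by
  have h0 := integrable_exp_neg_mul_sq hb
  have h1 : Integrable fun y : ℝ => |y| * exp (-b * y ^ 2) :=
    (integrable_mul_exp_neg_mul_sq hb).abs.congr (ae_of_all _ fun y => by simp [abs_mul])
  have h2 : Integrable fun y : ℝ => y ^ 2 * exp (-b * y ^ 2) := by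
    simpa [rpow_natCast] using integrable_rpow_mul_exp_neg_mul_sq hb (s := 2) (by norm_num)
  exact (((h0.const_mul A).add (h1.const_mul B)).add (h2.const_mul D)).congr
    (ae_of_all _ fun y => by simp only [Pi.add_apply]; ring)

lemma integrable_of_abs_le_quadratic_mul_exp_neg_mul_sq {u : ℝ → ℝ}
    (hu : AEStronglyMeasurable u) {b : ℝ} (hb : 0 < b) {A B D : ℝ}
    (hle : ∀ y, |u y| ≤ (A + B * |y| + D * y ^ 2) * exp (-b * y ^ 2)) : Integrable u :=
  (integrable_quadratic_mul_exp_neg_mul_sq hb A B D).mono' hu (ae_of_all _ hle)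

lemma abs_setIntegral_le_of_sq_le {h k : ℝ → ℝ} {S : Set ℝ} (hS : MeasurableSet S) {z b : ℝ}
    (hb : 0 ≤ b) (hk : Integrable k) (hle : ∀ y, |h y| ≤ k y * exp (-b * y ^ 2))
    (hz : ∀ y ∈ S, z ^ 2 ≤ y ^ 2) :
    |∫ y in S, h y| ≤ (∫ y, k y) * exp (-b * z ^ 2) := by
  have hk0 : ∀ y, 0 ≤ k y := fun y =>
    nonneg_of_mul_nonneg_left ((abs_nonneg _).trans (hle y)) (exp_pos _)
  calc |∫ y in S, h y| ≤ ∫ y in S, k y * exp (-b * z ^ 2) := by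
        refine norm_integral_le_of_norm_le (f := h) (hk.mul_const _).integrableOn
          ((ae_restrict_iff' hS).2 (ae_of_all _ fun y hy => (hle y).trans ?_))
        exact mul_le_mul_of_nonneg_left (exp_le_exp.2 (by nlinarith [hz y hy])) (hk0 y)
    _ = (∫ y in S, k y) * exp (-b * z ^ 2) := integral_mul_const _ _
    _ ≤ (∫ y, k y) * exp (-b * z ^ 2) :=
        mul_le_mul_of_nonneg_right (setIntegral_le_integral hk (ae_of_all _ hk0)) (exp_pos _).le

lemma abs_integral_Iic_le_of_integral_eq_zero {h k : ℝ → ℝ} {b : ℝ} (hb : 0 ≤ b)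
    (hint : Integrable h) (h0 : ∫ y, h y = 0) (hk : Integrable k)
    (hle : ∀ y, |h y| ≤ k y * exp (-b * y ^ 2)) (z : ℝ) :
    |∫ y in Iic z, h y| ≤ (∫ y, k y) * exp (-b * z ^ 2) := by
  rcases le_total z 0 with hz | hz
  · exact abs_setIntegral_le_of_sq_le measurableSet_Iic hb hk hle fun y hy => by
      nlinarith [mem_Iic.1 hy]
  · have hsplit := intervalIntegral.integral_Iic_add_Ioi (b := z) hint.integrableOn
      hint.integrableOn
    rw [h0, add_eq_zero_iff_eq_neg] at hsplit
    rw [hsplit, abs_neg]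
    exact abs_setIntegral_le_of_sq_le measurableSet_Ioi hb hk hle fun y hy => by
      nlinarith [mem_Ioi.1 hy]

lemma hasDerivAt_integral_Iic {h : ℝ → ℝ} (hh : Continuous h) (hint : Integrable h) (z : ℝ) :
    HasDerivAt (fun w => ∫ y in Iic w, h y) (h z) z := by
  have hsplit : (fun w => ∫ y in Iic w, h y) =
      fun w => (∫ y in Iic 0, h y) + ∫ y in (0 : ℝ)..w, h y := by
    funext w
    rw [← intervalIntegral.integral_Iic_sub_Iic hint.integrableOn hint.integrableOn]
    ring
  rw [hsplit]
  exact (hh.integral_hasStrictDerivAt 0 z).hasDerivAt.const_add _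

theorem integral_integral_Iic_eq_neg_integral_mul {h : ℝ → ℝ} (hh : Continuous h) {A B b : ℝ}
    (hb : 0 < b) (hle : ∀ y, |h y| ≤ (A + B * |y|) * exp (-b * y ^ 2)) (h0 : ∫ y, h y = 0) :
    ∫ z, (∫ y in Iic z, h y) = -∫ y, y * h y := by
  set g : ℝ → ℝ := fun z => ∫ y in Iic z, h y
  have hint : Integrable h :=
    integrable_of_abs_le_quadratic_mul_exp_neg_mul_sq hh.aestronglyMeasurable hb (D := 0)
      fun y => by simpa using hle y
  have hg' : ∀ z, HasDerivAt g (h z) z := hasDerivAt_integral_Iic hh hint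
  have hg : Continuous g := continuous_iff_continuousAt.2 fun z => (hg' z).continuousAt
  -- one half of the Gaussian weight of `h` pays for the tail integral, the other half
  -- survives in `g`
  set K := ∫ y, (A + B * |y|) * exp (-(b / 2) * y ^ 2)
  have hg_le : ∀ z, |g z| ≤ K * exp (-(b / 2) * z ^ 2) := by
    refine abs_integral_Iic_le_of_integral_eq_zero (by positivity) hint h0 ?_ fun y => ?_
    · simpa using integrable_quadratic_mul_exp_neg_mul_sq (half_pos hb) A B 0
    · rw [mul_assoc, ← exp_add]
      convert hle y using 3
      ring
  have hparts := integral_mul_deriv_eq_deriv_mul_of_integrable (u := fun y => y)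
    (u' := fun _ => 1) (v := g) (v' := h) (fun y _ => hasDerivAt_id y) (fun y _ => hg' y) ?_ ?_ ?_
  · simp only [one_mul] at hparts
    linarith
  · refine integrable_of_abs_le_quadratic_mul_exp_neg_mul_sq
      (continuous_id.mul hh).aestronglyMeasurable hb (A := 0) (B := A) (D := B) fun y => ?_
    simp only [Pi.mul_apply, abs_mul]
    calc |y| * |h y| ≤ |y| * ((A + B * |y|) * exp (-b * y ^ 2)) := by gcongr; exact hle y
      _ = _ := by rw [← sq_abs y]; ring
  · refine integrable_of_abs_le_quadratic_mul_exp_neg_mul_sq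
      (continuous_const.mul hg).aestronglyMeasurable (half_pos hb) (A := K) (B := 0) (D := 0)
      fun y => ?_
    simpa using hg_le y
  · refine integrable_of_abs_le_quadratic_mul_exp_neg_mul_sq
      (continuous_id.mul hg).aestronglyMeasurable (half_pos hb) (A := 0) (B := K) (D := 0)
      fun y => ?_
    simp only [Pi.mul_apply, abs_mul]
    calc |y| * |g y| ≤ |y| * (K * exp (-(b / 2) * y ^ 2)) := by gcongr; exact hg_le y
      _ = _ := by ring

theorem integral_mul_gaussianReal_eq_integral_deriv {ψ : ℝ → ℝ} (hψ : Differentiable ℝ ψ)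
    {C : ℝ} (hC : ∀ y, |deriv ψ y| ≤ C) :
    ∫ z, z * ψ z ∂gaussianReal 0 1 = ∫ z, deriv ψ z ∂gaussianReal 0 1 := by
  rw [integral_gaussianReal_zero_one, integral_gaussianReal_zero_one]
  congr 1
  have hexp : ∀ y : ℝ, -y ^ 2 / 2 = -(1 / 2) * y ^ 2 := fun y => by ring
  have hgrowth := abs_le_abs_add_mul_abs_of_abs_deriv_le hψ hC
  have hρ (y : ℝ) : HasDerivAt (fun y : ℝ => exp (-y ^ 2 / 2)) (-y * exp (-y ^ 2 / 2)) y := by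
    simpa [mul_comm] using (((hasDerivAt_pow 2 y).neg.div_const 2).congr_deriv (by ring) :
      HasDerivAt (fun y : ℝ => -y ^ 2 / 2) (-y) y).exp
  have hparts := integral_mul_deriv_eq_deriv_mul_of_integrable (u := ψ) (u' := deriv ψ)
    (v := fun y => exp (-y ^ 2 / 2)) (v' := fun y => -y * exp (-y ^ 2 / 2))
    (fun y _ => (hψ y).hasDerivAt) (fun y _ => hρ y) ?_ ?_ ?_
  · calc ∫ y, exp (-y ^ 2 / 2) * (y * ψ y) = -∫ y, ψ y * (-y * exp (-y ^ 2 / 2)) := by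
          rw [← integral_neg]; congr 1; funext y; ring
      _ = ∫ y, exp (-y ^ 2 / 2) * deriv ψ y := by
          rw [hparts, neg_neg]; congr 1; funext y; ring
  · refine integrable_of_abs_le_quadratic_mul_exp_neg_mul_sq
      (hψ.continuous.mul (by fun_prop)).aestronglyMeasurable (b := 1 / 2) (by norm_num)
      (A := 0) (B := |ψ 0|) (D := C) fun y => ?_
    simp only [Pi.mul_apply, abs_mul, abs_neg, abs_exp, ← hexp]
    calc |ψ y| * (|y| * exp (-y ^ 2 / 2)) ≤ (|ψ 0| + C * |y|) * (|y| * exp (-y ^ 2 / 2)) := by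
          gcongr; exact hgrowth y
      _ = _ := by rw [← sq_abs y]; ring
  · refine integrable_of_abs_le_quadratic_mul_exp_neg_mul_sq
      ((measurable_deriv ψ).aestronglyMeasurable.mul (by fun_prop)) (b := 1 / 2) (by norm_num)
      (A := C) (B := 0) (D := 0) fun y => ?_
    simp only [Pi.mul_apply, abs_mul, abs_exp, ← hexp]
    simpa using mul_le_mul_of_nonneg_right (hC y) (exp_pos _).le
  · refine integrable_of_abs_le_quadratic_mul_exp_neg_mul_sq
      (hψ.continuous.mul (by fun_prop)).aestronglyMeasurable (b := 1 / 2) (by norm_num)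
      (A := |ψ 0|) (B := C) (D := 0) fun y => ?_
    simp only [Pi.mul_apply, abs_mul, abs_exp, ← hexp]
    simpa using mul_le_mul_of_nonneg_right (hgrowth y) (exp_pos _).le

/-- Solves Stein's equation `g' - z g = ψ`, since `(e^{-z²/2} g)' = e^{-z²/2} ψ`. -/
noncomputable def steinSolution (ψ : ℝ → ℝ) (z : ℝ) : ℝ :=
  exp (z ^ 2 / 2) * ∫ y in Iic z, exp (-y ^ 2 / 2) * ψ y

theorem integral_steinSolution_gaussianReal {ψ : ℝ → ℝ} (hψ : Differentiable ℝ ψ) {C : ℝ}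
    (hC : ∀ y, |deriv ψ y| ≤ C) (hmean : ∫ z, ψ z ∂gaussianReal 0 1 = 0) :
    ∫ z, steinSolution ψ z ∂gaussianReal 0 1 = -∫ z, deriv ψ z ∂gaussianReal 0 1 := by
  rw [integral_gaussianReal_zero_one] at hmean
  have hmean' : ∫ y, exp (-y ^ 2 / 2) * ψ y = 0 :=
    (mul_eq_zero.1 hmean).resolve_left (by positivity)
  have hle (y : ℝ) :
      |exp (-y ^ 2 / 2) * ψ y| ≤ (|ψ 0| + C * |y|) * exp (-(1 / 2) * y ^ 2) := by
    rw [abs_mul, abs_exp, mul_comm, show -y ^ 2 / 2 = -(1 / 2) * y ^ 2 by ring]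
    exact mul_le_mul_of_nonneg_right (abs_le_abs_add_mul_abs_of_abs_deriv_le hψ hC y)
      (exp_pos _).le
  calc ∫ z, steinSolution ψ z ∂gaussianReal 0 1
      = (√(2 * π))⁻¹ * ∫ z, ∫ y in Iic z, exp (-y ^ 2 / 2) * ψ y := by
        rw [integral_gaussianReal_zero_one]
        congr 2
        funext z
        rw [steinSolution, ← mul_assoc, ← exp_add, neg_div, neg_add_cancel, exp_zero, one_mul]
    _ = -∫ z, z * ψ z ∂gaussianReal 0 1 := by
        rw [integral_integral_Iic_eq_neg_integral_mul (by have := hψ.continuous; fun_prop)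
          (by norm_num) hle hmean', integral_gaussianReal_zero_one]
        have hcomm :
            ∫ y, y * (exp (-y ^ 2 / 2) * ψ y) = ∫ y, exp (-y ^ 2 / 2) * (y * ψ y) := by
          congr 1; funext y; ring
        rw [hcomm]
        ring
    _ = -∫ z, deriv ψ z ∂gaussianReal 0 1 := by
        rw [integral_mul_gaussianReal_eq_integral_deriv hψ hC]

lemma hasDerivAt_integral_comp_add {α : Type*} [MeasurableSpace α] {μ : Measure α}
    [IsFiniteMeasure μ] {φ : ℝ → ℝ} (hφ : Differentiable ℝ φ) {C : ℝ}
    (hC : ∀ y, |deriv φ y| ≤ C) {w : α → ℝ} (hw : AEMeasurable w μ) {x : ℝ}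
    (hint : Integrable (fun a => φ (x + w a)) μ) :
    HasDerivAt (fun u => ∫ a, φ (u + w a) ∂μ) (∫ a, deriv φ (x + w a) ∂μ) x :=
  (hasDerivAt_integral_of_dominated_loc_of_deriv_le (bound := fun _ => C) (x₀ := x)
    (F := fun u a => φ (u + w a)) (Metric.ball_mem_nhds x one_pos)
    (Filter.Eventually.of_forall fun u =>
      (hφ.continuous.measurable.comp_aemeasurable (hw.const_add u)).aestronglyMeasurable)
    hint ((measurable_deriv φ).comp_aemeasurable (hw.const_add x)).aestronglyMeasurable
    (ae_of_all _ fun a u _ => hC (u + w a)) (integrable_const C)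
    (ae_of_all _ fun a u _ => ((hφ _).hasDerivAt.comp u
      ((hasDerivAt_id u).add_const (w a))).congr_deriv (by simp))).2

/-- The Gaussian expectation of the Stein-equation solution equals minus the space derivative
of the heat-equation solution: `E[f(x + √t Z)] = −E[φ'(x + √t Z)] = −∂ₓV(t,x)`, where
`V(t,x) = E[φ(x + √t Z)]`. -/
theorem stmt11 (φ : ℝ → ℝ) (hφ : ContDiff ℝ 1 φ) (C : ℝ) (hbd : ∀ y, |deriv φ y| ≤ C)
    (t x : ℝ) (ht : 0 < t) :
    let c : ℝ := ∫ z, φ (x + Real.sqrt t * z) ∂(ProbabilityTheory.gaussianReal 0 1)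
    let f : ℝ → ℝ := fun w =>
      (1 / Real.sqrt t) * Real.exp ((w - x) ^ 2 / (2 * t)) *
        ∫ y in Set.Iic ((w - x) / Real.sqrt t),
          Real.exp (-y ^ 2 / 2) * (φ (x + Real.sqrt t * y) - c)
    (∫ z, f (x + Real.sqrt t * z) ∂(ProbabilityTheory.gaussianReal 0 1)) =
      -∫ z, deriv φ (x + Real.sqrt t * z) ∂(ProbabilityTheory.gaussianReal 0 1) ∧
    (∫ z, f (x + Real.sqrt t * z) ∂(ProbabilityTheory.gaussianReal 0 1)) =
      -deriv (fun y => ∫ z, φ (y + Real.sqrt t * z) ∂(ProbabilityTheory.gaussianReal 0 1)) x := by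
  intro c f
  have hs : 0 < √t := sqrt_pos.2 ht
  have hφd : Differentiable ℝ φ := hφ.differentiable one_ne_zero
  set ψ : ℝ → ℝ := fun z => φ (x + √t * z) - c
  have hψ' (z : ℝ) : HasDerivAt ψ (√t * deriv φ (x + √t * z)) z :=
    (((hφd _).hasDerivAt.comp z (((hasDerivAt_id z).const_mul √t).const_add x)).sub_const
      c).congr_deriv (by simp [mul_comm])
  have hψd : Differentiable ℝ ψ := fun z => (hψ' z).differentiableAt
  have hψC (z : ℝ) : |deriv ψ z| ≤ √t * C := by
    rw [(hψ' z).deriv, abs_mul, abs_of_pos hs]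
    exact mul_le_mul_of_nonneg_left (hbd _) hs.le
  have hint : Integrable (fun z => φ (x + √t * z)) (gaussianReal 0 1) := by
    refine ((integrable_gaussianReal_of_abs_deriv_le hψd hψC).add (integrable_const c)).congr
      (ae_of_all _ fun z => ?_)
    simp [ψ]
  have hmean : ∫ z, ψ z ∂gaussianReal 0 1 = 0 := by
    rw [integral_sub hint (integrable_const c)]
    simp [c]
  have hf (z : ℝ) : f (x + √t * z) = (√t)⁻¹ * steinSolution ψ z := by
    have hsq : (x + √t * z - x) ^ 2 / (2 * t) = z ^ 2 / 2 := by
      rw [add_sub_cancel_left, mul_pow, sq_sqrt ht.le]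
      field_simp
    have hdiv : (x + √t * z - x) / √t = z := by
      rw [add_sub_cancel_left]
      field_simp
    simp only [f, hsq, hdiv, one_div, steinSolution, mul_assoc]
    rfl
  have hE :
      ∫ z, f (x + √t * z) ∂gaussianReal 0 1 = -∫ z, deriv φ (x + √t * z) ∂gaussianReal 0 1 := by
    simp only [hf, integral_const_mul, integral_steinSolution_gaussianReal hψd hψC hmean,
      fun z => (hψ' z).deriv]
    field_simp
  refine ⟨hE, ?_⟩
  rw [(hasDerivAt_integral_comp_add hφd hbd (measurable_const_mul √t).aemeasurable hint).deriv, hE]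
end

section
/- Let X_1, …, X_n be i.i.d. real random variables on a (classical) probability space with E[X_1] = 0, E[X_1²] = 1 and E[|X_1|³] < ∞, and let 0 < σ_ ≤ σ̄. For a sequence σ = (σ_1, …, σ_n) of Borel measurable functions σ_i : ℝ → [σ_, σ̄], define W^σ_0 := 0 and W^σ_i := W^σ_{i−1} + σ_i(W^σ_{i−1}) X_i/√n for 1 ≤ i ≤ n. Then for every Lipschitz φ : ℝ → ℝ and every 0 ≤ i < n, sup_σ E[φ(W^σ_{i+1})] = sup_σ E[Ψ(W^σ_i)], where Ψ(s) := sup_{λ ∈ [σ_, σ̄]} E[φ(s + λ X_1/√n)] and both suprema are over all such sequences σ of measurable functions. -/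
/-!
Since `W^σ_i` is a measurable function of `X_0, …, X_{i-1}`, it is independent of `X_i`, and
Fubini gives `E φ(W^σ_{i+1}) = E G(W^σ_i, σ_i(W^σ_i))` with `G(s, λ) = E φ(s + λ X_0/√n)`;
hence `E φ(W^σ_{i+1}) ≤ E Ψ(W^σ_i)`. Conversely `G` is Lipschitz in `s` and continuous in `λ`,
so choosing from a dense sequence of `[σ_, σ̄]` the first point where `G(s, ·) > Ψ(s) - ε` gives a
measurable control `τ`. Replacing `σ_i` by `τ` leaves `W^σ_i` unchanged and brings
`E φ(W_{i+1})` within `ε` of `E Ψ(W^σ_i)`.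
-/

open MeasureTheory

/-- The controlled random walk `W^σ_0 = 0`, `W^σ_{i+1} = W^σ_i + σ_i(W^σ_i) X_i/√n`. -/
noncomputable def WS {Ω : Type*} (X : ℕ → Ω → ℝ) (n : ℕ) (σ : ℕ → ℝ → ℝ) : ℕ → Ω → ℝ
  | 0 => fun _ => 0
  | (i + 1) => fun ω =>
      WS X n σ i ω + σ i (WS X n σ i ω) * X i ω / Real.sqrt n

open ProbabilityTheory Set Filter

section General

variable {Ω : Type*} [MeasurableSpace Ω]

lemma LipschitzWith.integrable_comp {E F : Type*} [NormedAddCommGroup E] [NormedAddCommGroup F]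
    {μ : Measure Ω} [IsFiniteMeasure μ] {φ : E → F} {L : NNReal} (hφ : LipschitzWith L φ)
    {f : Ω → E} (hf : Integrable f μ) : Integrable (fun ω => φ (f ω)) μ := by
  refine Integrable.mono' ((integrable_const ‖φ 0‖).add (hf.norm.const_mul L))
    (hφ.continuous.comp_aestronglyMeasurable hf.1) (Eventually.of_forall fun ω => ?_)
  have h := hφ.norm_sub_le (f ω) 0
  rw [sub_zero] at h
  simp only [Pi.add_apply]
  linarith [norm_le_insert' (φ (f ω)) (φ 0)]

lemma lipschitzWith_integral {α E : Type*} [PseudoMetricSpace α] [NormedAddCommGroup E]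
    [NormedSpace ℝ E] {μ : Measure Ω} {F : α → Ω → E} (hF : ∀ a, Integrable (F a) μ)
    {g : Ω → ℝ} (hg : Integrable g μ) (h : ∀ a b ω, dist (F a ω) (F b ω) ≤ g ω * dist a b) :
    LipschitzWith (Real.toNNReal (∫ ω, g ω ∂μ)) fun a => ∫ ω, F a ω ∂μ := by
  refine LipschitzWith.of_dist_le' fun a b => ?_
  rw [dist_eq_norm, ← integral_sub (hF a) (hF b), ← integral_mul_const]
  exact norm_integral_le_of_norm_le (hg.mul_const _)
    (Eventually.of_forall fun ω => by simpa only [dist_eq_norm] using h a b ω)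

lemma ProbabilityTheory.IndepFun.integral_comp_eq_integral_integral {P : Measure Ω}
    [IsFiniteMeasure P] {β γ : Type*} [MeasurableSpace β] [MeasurableSpace γ]
    {W : Ω → β} {Z : Ω → γ} (hW : Measurable W) (hZ : Measurable Z) (hWZ : IndepFun W Z P)
    {h : β × γ → ℝ} (hh : Measurable h) (hint : Integrable (fun ω => h (W ω, Z ω)) P) :
    Integrable (fun ω => ∫ z, h (W ω, z) ∂(P.map Z)) P ∧
      ∫ ω, h (W ω, Z ω) ∂P = ∫ ω, ∫ z, h (W ω, z) ∂(P.map Z) ∂P := by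
  have hWZm : Measurable fun ω => (W ω, Z ω) := hW.prodMk hZ
  have hmap : P.map (fun ω => (W ω, Z ω)) = (P.map W).prod (P.map Z) :=
    (indepFun_iff_map_prod_eq_prod_map_map hW.aemeasurable hZ.aemeasurable).1 hWZ
  have hprod : Integrable h ((P.map W).prod (P.map Z)) := by
    rw [← hmap]
    exact (integrable_map_measure hh.aestronglyMeasurable hWZm.aemeasurable).2 hint
  have hinner := hprod.integral_prod_left
  refine ⟨(integrable_map_measure hinner.1 hW.aemeasurable).1 hinner, ?_⟩
  calc ∫ ω, h (W ω, Z ω) ∂P = ∫ q, h q ∂((P.map W).prod (P.map Z)) := by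
        rw [← hmap, integral_map hWZm.aemeasurable hh.aestronglyMeasurable]
    _ = ∫ w, ∫ z, h (w, z) ∂(P.map Z) ∂(P.map W) := integral_prod h hprod
    _ = ∫ ω, ∫ z, h (W ω, z) ∂(P.map Z) ∂P := integral_map hW.aemeasurable hinner.1

end General

lemma lipschitzWith_csSup_image {α β : Type*} [PseudoMetricSpace α] {K : Set β}
    (hK : K.Nonempty) {f : α → β → ℝ} {L : NNReal} (hf : ∀ b ∈ K, LipschitzWith L (f · b))
    (hbdd : ∀ a, BddAbove (f a '' K)) : LipschitzWith L fun a => sSup (f a '' K) := by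
  refine LipschitzWith.of_le_add_mul L fun a a' => csSup_le (hK.image _) ?_
  rintro _ ⟨b, hb, rfl⟩
  calc f a b ≤ f a' b + L * dist a a' := (hf b hb).le_add_mul a a'
    _ ≤ sSup (f a' '' K) + L * dist a a' := by
        gcongr; exact le_csSup (hbdd a') (mem_image_of_mem _ hb)

lemma exists_measurable_selection_lt {α β : Type*} [MeasurableSpace α] [TopologicalSpace β]
    [SecondCountableTopology β] [MeasurableSpace β] {K : Set β} (hK : K.Nonempty)
    {f : α → ℝ} {G : α → β → ℝ} (hf : Measurable f) (hGm : ∀ b ∈ K, Measurable (G · b))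
    (hGc : ∀ a, ContinuousOn (G a) K) (hex : ∀ a, ∃ b ∈ K, f a < G a b) :
    ∃ τ : α → β, Measurable τ ∧ ∀ a, τ a ∈ K ∧ f a < G a (τ a) := by
  have : Nonempty K := hK.to_subtype
  obtain ⟨u, hu⟩ := TopologicalSpace.exists_dense_seq K
  have hex' : ∀ a, ∃ k, f a < G a (u k) := by
    intro a
    obtain ⟨b, hb, hlt⟩ := hex a
    exact hu.exists_mem_open (isOpen_lt continuous_const (hGc a).domRestrict) ⟨⟨b, hb⟩, hlt⟩
  classical
  refine ⟨fun a => u (Nat.find (hex' a)), ?_, fun a => ⟨(u _).2, Nat.find_spec (hex' a)⟩⟩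
  exact Measurable.find (f := fun k _ => (u k : β)) (fun _ => measurable_const)
    (fun k => measurableSet_lt hf (hGm _ (u k).2)) hex'

lemma csSup_image_eq_of_le_of_forall_le_add {α : Type*} {A : Set α} {f g : α → ℝ}
    (hA : A.Nonempty) (hbdd : BddAbove (g '' A)) (hle : ∀ a ∈ A, f a ≤ g a)
    (happrox : ∀ a ∈ A, ∀ ε > 0, ∃ b ∈ A, g a ≤ f b + ε) :
    sSup (f '' A) = sSup (g '' A) := by
  obtain ⟨B, hB⟩ := hbdd
  have hfbdd : BddAbove (f '' A) :=
    ⟨B, by rintro _ ⟨a, ha, rfl⟩; exact (hle a ha).trans (hB (mem_image_of_mem _ ha))⟩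
  refine le_antisymm (csSup_le (hA.image _) ?_) (csSup_le (hA.image _) ?_)
  · rintro _ ⟨a, ha, rfl⟩
    exact (hle a ha).trans (le_csSup ⟨B, hB⟩ (mem_image_of_mem _ ha))
  · rintro _ ⟨a, ha, rfl⟩
    refine le_of_forall_pos_le_add fun ε hε => ?_
    obtain ⟨b, hb, hab⟩ := happrox a ha ε hε
    exact hab.trans (by gcongr; exact le_csSup hfbdd (mem_image_of_mem _ hb))

noncomputable section

variable {Ω : Type*} [MeasurableSpace Ω]

def stepMean (P : Measure Ω) (Y : Ω → ℝ) (φ : ℝ → ℝ) (s lam : ℝ) : ℝ :=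
  ∫ ω, φ (s + lam * Y ω) ∂P

-- The paper's `Ψ` is `maxStepMean P (X_0/√n) φ [σ_, σ̄]`.
def maxStepMean (P : Measure Ω) (Y : Ω → ℝ) (φ : ℝ → ℝ) (K : Set ℝ) (s : ℝ) : ℝ :=
  sSup (stepMean P Y φ s '' K)

end

section StepMean

variable {Ω : Type*} [MeasurableSpace Ω] {P : Measure Ω} [IsProbabilityMeasure P]
  {Y : Ω → ℝ} {φ : ℝ → ℝ} {L : NNReal} {K : Set ℝ}

lemma integrable_comp_add_mul (hY : Integrable Y P) (hφ : LipschitzWith L φ) (s lam : ℝ) :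
    Integrable (fun ω => φ (s + lam * Y ω)) P :=
  hφ.integrable_comp ((integrable_const s).add (hY.const_mul lam))

lemma lipschitzWith_stepMean_left (hY : Integrable Y P) (hφ : LipschitzWith L φ) (lam : ℝ) :
    LipschitzWith L fun s => stepMean P Y φ s lam := by
  have h := lipschitzWith_integral (μ := P) (g := fun _ => (L : ℝ))
    (fun s => integrable_comp_add_mul hY hφ s lam) (integrable_const _) fun s s' ω => by
      simpa [dist_eq_norm] using hφ.dist_le_mul (s + lam * Y ω) (s' + lam * Y ω)
  simpa [stepMean] using h

lemma continuous_stepMean (hY : Integrable Y P) (hφ : LipschitzWith L φ) (s : ℝ) :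
    Continuous (stepMean P Y φ s) :=
  (lipschitzWith_integral (μ := P) (g := fun ω => L * |Y ω|)
    (fun lam => integrable_comp_add_mul hY hφ s lam) (hY.abs.const_mul _) fun lam lam' ω => by
      refine (hφ.dist_le_mul _ _).trans (le_of_eq ?_)
      rw [Real.dist_eq, Real.dist_eq, add_sub_add_left_eq_sub, ← sub_mul, abs_mul]
      ring).continuous

lemma stepMean_le_maxStepMean (hY : Integrable Y P) (hφ : LipschitzWith L φ)
    (hK : IsCompact K) (s : ℝ) {lam : ℝ} (hlam : lam ∈ K) :
    stepMean P Y φ s lam ≤ maxStepMean P Y φ K s :=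
  le_csSup (hK.image (continuous_stepMean hY hφ s)).bddAbove (mem_image_of_mem _ hlam)

lemma lipschitzWith_maxStepMean (hY : Integrable Y P) (hφ : LipschitzWith L φ)
    (hK : IsCompact K) (hK' : K.Nonempty) : LipschitzWith L (maxStepMean P Y φ K) :=
  lipschitzWith_csSup_image hK' (fun lam _ => lipschitzWith_stepMean_left hY hφ lam)
    fun s => (hK.image (continuous_stepMean hY hφ s)).bddAbove

lemma exists_measurable_maxStepMean_sub_lt (hY : Integrable Y P) (hφ : LipschitzWith L φ)
    (hK : IsCompact K) (hK' : K.Nonempty) {ε : ℝ} (hε : 0 < ε) :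
    ∃ τ : ℝ → ℝ, Measurable τ ∧
      ∀ s, τ s ∈ K ∧ maxStepMean P Y φ K s - ε < stepMean P Y φ s (τ s) :=
  exists_measurable_selection_lt hK'
    ((lipschitzWith_maxStepMean hY hφ hK hK').continuous.measurable.sub_const ε)
    (fun lam _ => (lipschitzWith_stepMean_left hY hφ lam).continuous.measurable)
    (fun s => (continuous_stepMean hY hφ s).continuousOn)
    fun s => by
      obtain ⟨_, ⟨lam, hlam, rfl⟩, hlt⟩ := exists_lt_of_lt_csSup (hK'.image _) (sub_lt_self _ hε)
      exact ⟨lam, hlam, hlt⟩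

end StepMean

section Walk

variable {Ω : Type*} {X : ℕ → Ω → ℝ} {n : ℕ} {σ : ℕ → ℝ → ℝ}

lemma WS_succ_apply (i : ℕ) (ω : Ω) :
    WS X n σ (i + 1) ω = WS X n σ i ω + σ i (WS X n σ i ω) * (X i ω / Real.sqrt n) := by
  simp only [WS, mul_div_assoc]

lemma WS_congr {σ' : ℕ → ℝ → ℝ} : ∀ i, (∀ j < i, σ j = σ' j) → WS X n σ i = WS X n σ' i
  | 0, _ => rfl
  | i + 1, h => by
    have hi := WS_congr i fun j hj => h j (Nat.lt_succ_of_lt hj)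
    funext ω
    simp only [WS, hi, h i i.lt_succ_self]

lemma exists_measurable_WS_eq (hσ : ∀ j, Measurable (σ j)) :
    ∀ i, ∃ F : (Fin i → ℝ) → ℝ, Measurable F ∧ ∀ ω, WS X n σ i ω = F fun j => X j ω
  | 0 => ⟨fun _ => 0, measurable_const, fun _ => rfl⟩
  | i + 1 => by
    obtain ⟨F, hF, hFW⟩ := exists_measurable_WS_eq hσ i
    have hFinit : Measurable fun v : Fin (i + 1) → ℝ => F fun j => v j.castSucc :=
      hF.comp (measurable_pi_lambda _ fun j => measurable_pi_apply _)
    refine ⟨fun v => F (fun j => v j.castSucc) +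
      σ i (F fun j => v j.castSucc) * v (Fin.last i) / Real.sqrt n,
      hFinit.add ((((hσ i).comp hFinit).mul (measurable_pi_apply _)).div_const _), fun ω => ?_⟩
    simp only [WS, hFW, Fin.val_castSucc, Fin.val_last]

lemma measurable_WS [MeasurableSpace Ω] (hX : ∀ i, Measurable (X i))
    (hσ : ∀ j, Measurable (σ j)) (i : ℕ) : Measurable (WS X n σ i) := by
  obtain ⟨F, hF, hFW⟩ := exists_measurable_WS_eq (X := X) (n := n) hσ i
  rw [funext hFW]
  exact hF.comp (measurable_pi_lambda _ fun j => hX j)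

lemma indepFun_WS [MeasurableSpace Ω] {P : Measure Ω} (hX : ∀ i, Measurable (X i))
    (hσ : ∀ j, Measurable (σ j)) (hindep : iIndepFun (fun i : Fin n => X i) P) {i : ℕ}
    (hi : i < n) :
    IndepFun (WS X n σ i) (X i) P := by
  obtain ⟨F, hF, hFW⟩ := exists_measurable_WS_eq (X := X) (n := n) hσ i
  classical
  let S : Finset (Fin n) := Finset.univ.filter fun j => (j : ℕ) < i
  let T : Finset (Fin n) := {⟨i, hi⟩}
  have hiT : (⟨i, hi⟩ : Fin n) ∈ T := Finset.mem_singleton_self _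
  have hST : Disjoint S T := by
    simp only [S, T, Finset.disjoint_singleton_right, Finset.mem_filter, lt_irrefl, and_false,
      not_false_eq_true]
  have h := (hindep.indepFun_finset S T hST fun j => hX j).comp
    (φ := fun v : S → ℝ => F fun j => v ⟨⟨j, j.2.trans hi⟩, by simp [S]⟩)
    (ψ := fun v : T → ℝ => v ⟨_, hiT⟩)
    (hF.comp (measurable_pi_lambda _ fun _ => measurable_pi_apply _))
    (show Measurable fun v : T → ℝ => v ⟨_, hiT⟩ from measurable_pi_apply _)
  convert h using 1
  exacts [funext hFW, rfl]

lemma abs_WS_le {C : ℝ} (hσ : ∀ j s, |σ j s| ≤ C) (ω : Ω) :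
    ∀ i, |WS X n σ i ω| ≤ C * ∑ j ∈ Finset.range i, |X j ω / Real.sqrt n|
  | 0 => by simp [WS]
  | i + 1 => by
    rw [WS_succ_apply, Finset.sum_range_succ, mul_add]
    refine (abs_add_le _ _).trans (add_le_add (abs_WS_le hσ ω i) ?_)
    rw [abs_mul]
    exact mul_le_mul_of_nonneg_right (hσ _ _) (abs_nonneg _)

lemma integrable_WS [MeasurableSpace Ω] {P : Measure Ω} (hX : ∀ i, Measurable (X i))
    (hσ : ∀ j, Measurable (σ j)) {C : ℝ} (hσC : ∀ j s, |σ j s| ≤ C) {i : ℕ}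
    (hXi : ∀ j < i, Integrable (X j) P) :
    Integrable (WS X n σ i) P :=
  Integrable.mono' ((integrable_finsetSum _ fun j hj =>
      ((hXi j (Finset.mem_range.1 hj)).div_const _).abs).const_mul C)
    (measurable_WS hX hσ i).aestronglyMeasurable
    (Eventually.of_forall fun ω => abs_WS_le hσC ω i)

lemma integral_abs_WS_le [MeasurableSpace Ω] {P : Measure Ω} (hX : ∀ i, Measurable (X i))
    (hσ : ∀ j, Measurable (σ j)) {C : ℝ} (hσC : ∀ j s, |σ j s| ≤ C) {i : ℕ}
    (hXi : ∀ j < i, Integrable (X j) P) :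
    ∫ ω, |WS X n σ i ω| ∂P ≤ C * ∑ j ∈ Finset.range i, ∫ ω, |X j ω / Real.sqrt n| ∂P := by
  have hint : ∀ j ∈ Finset.range i, Integrable (fun ω => |X j ω / Real.sqrt n|) P :=
    fun j hj => ((hXi j (Finset.mem_range.1 hj)).div_const _).abs
  rw [← integral_finsetSum _ hint, ← integral_const_mul]
  exact integral_mono (integrable_WS hX hσ hσC hXi).abs
    ((integrable_finsetSum _ hint).const_mul C) fun ω => abs_WS_le hσC ω i

end Walk

def admissibleControls (K : Set ℝ) : Set (ℕ → ℝ → ℝ) :=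
  {σ | ∀ j, Measurable (σ j) ∧ ∀ s, σ j s ∈ K}

lemma exists_forall_mem_admissibleControls_abs_le {K : Set ℝ} (hK : Bornology.IsBounded K) :
    ∃ C, ∀ σ ∈ admissibleControls K, ∀ j s, |σ j s| ≤ C := by
  obtain ⟨C, hC⟩ := hK.exists_norm_le
  exact ⟨C, fun σ hσ j s => hC _ ((hσ j).2 s)⟩

section DynamicProgramming

variable {Ω : Type*} [MeasurableSpace Ω] {P : Measure Ω} [IsProbabilityMeasure P]
  {X : ℕ → Ω → ℝ} {n : ℕ} {φ : ℝ → ℝ} {L : NNReal} {K : Set ℝ} {i : ℕ}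

lemma integral_comp_WS_succ (hX : ∀ i, Measurable (X i))
    (hindep : iIndepFun (fun i : Fin n => X i) P) (hid : IdentDistrib (X i) (X 0) P P)
    (hi : i < n) (hXint : ∀ j < n, Integrable (X j) P) (hφ : LipschitzWith L φ)
    {σ : ℕ → ℝ → ℝ} (hσ : ∀ j, Measurable (σ j)) {C : ℝ} (hσC : ∀ j s, |σ j s| ≤ C) :
    Integrable (fun ω => stepMean P (fun ω => X 0 ω / Real.sqrt n) φ (WS X n σ i ω)
        (σ i (WS X n σ i ω))) P ∧
      ∫ ω, φ (WS X n σ (i + 1) ω) ∂P = ∫ ω, stepMean P (fun ω => X 0 ω / Real.sqrt n) φ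
        (WS X n σ i ω) (σ i (WS X n σ i ω)) ∂P := by
  have hscale : Measurable fun x : ℝ => x / Real.sqrt n := measurable_id.div_const _
  have hmap : P.map (fun ω => X i ω / Real.sqrt n) = P.map (fun ω => X 0 ω / Real.sqrt n) :=
    (hid.comp hscale).map_eq
  have hh : Measurable fun q : ℝ × ℝ => φ (q.1 + σ i q.1 * q.2) :=
    hφ.continuous.measurable.comp (measurable_fst.add (((hσ i).comp measurable_fst).mul
      measurable_snd))
  have hint : Integrable (fun ω => φ (WS X n σ (i + 1) ω)) P :=
    hφ.integrable_comp (integrable_WS hX hσ hσC fun j hj => hXint j (by omega))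
  simp only [WS_succ_apply] at hint ⊢
  have hinner : ∀ w, ∫ z, φ (w + σ i w * z) ∂(P.map fun ω => X i ω / Real.sqrt n) =
      stepMean P (fun ω => X 0 ω / Real.sqrt n) φ w (σ i w) := fun w => by
    rw [hmap]
    exact integral_map ((hX 0).div_const _).aemeasurable
      (hφ.continuous.comp (by fun_prop : Continuous fun z => w + σ i w * z)).aestronglyMeasurable
  simpa only [hinner] using ((indepFun_WS hX hσ hindep hi).comp measurable_id hscale
    ).integral_comp_eq_integral_integral (measurable_WS hX hσ i) ((hX i).div_const _) hh hint

lemma integral_comp_WS_succ_le (hX : ∀ i, Measurable (X i))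
    (hindep : iIndepFun (fun i : Fin n => X i) P) (hid : IdentDistrib (X i) (X 0) P P)
    (hi : i < n) (hXint : ∀ j < n, Integrable (X j) P) (hφ : LipschitzWith L φ)
    (hK : IsCompact K) {σ : ℕ → ℝ → ℝ} (hσ : σ ∈ admissibleControls K) :
    ∫ ω, φ (WS X n σ (i + 1) ω) ∂P ≤
      ∫ ω, maxStepMean P (fun ω => X 0 ω / Real.sqrt n) φ K (WS X n σ i ω) ∂P := by
  have hσm j := (hσ j).1
  obtain ⟨C, hC⟩ := exists_forall_mem_admissibleControls_abs_le hK.isBounded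
  have hY := (hXint 0 (by omega)).div_const (Real.sqrt n)
  obtain ⟨hint, heq⟩ := integral_comp_WS_succ hX hindep hid hi hXint hφ hσm (hC σ hσ)
  rw [heq]
  have hΨ := lipschitzWith_maxStepMean hY hφ hK ⟨_, (hσ 0).2 0⟩
  refine integral_mono hint (hΨ.integrable_comp
    (integrable_WS hX hσm (hC σ hσ) fun j hj => hXint j (by omega))) fun ω => ?_
  exact stepMean_le_maxStepMean hY hφ hK _ ((hσ i).2 _)

lemma bddAbove_integral_maxStepMean_WS (hX : ∀ i, Measurable (X i)) (hi : i < n)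
    (hXint : ∀ j < n, Integrable (X j) P) (hφ : LipschitzWith L φ) (hK : IsCompact K)
    (hK' : K.Nonempty) :
    BddAbove ((fun σ => ∫ ω, maxStepMean P (fun ω => X 0 ω / Real.sqrt n) φ K
      (WS X n σ i ω) ∂P) '' admissibleControls K) := by
  obtain ⟨C, hC⟩ := exists_forall_mem_admissibleControls_abs_le hK.isBounded
  have hY := (hXint 0 (by omega)).div_const (Real.sqrt n)
  set Ψ := maxStepMean P (fun ω => X 0 ω / Real.sqrt n) φ K
  have hΨ : LipschitzWith L Ψ := lipschitzWith_maxStepMean hY hφ hK hK'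
  refine ⟨|Ψ 0| + L * (C * ∑ j ∈ Finset.range i, ∫ ω, |X j ω / Real.sqrt n| ∂P), ?_⟩
  rintro _ ⟨σ, hσ, rfl⟩
  have hσm j := (hσ j).1
  have hσC := hC σ hσ
  have hXi : ∀ j < i, Integrable (X j) P := fun j hj => hXint j (by omega)
  have hW := integrable_WS (n := n) hX hσm hσC hXi
  show ∫ ω, Ψ (WS X n σ i ω) ∂P ≤ _
  calc ∫ ω, Ψ (WS X n σ i ω) ∂P ≤ ∫ ω, (|Ψ 0| + L * |WS X n σ i ω|) ∂P := by
        refine integral_mono (hΨ.integrable_comp hW)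
          ((integrable_const _).add (hW.abs.const_mul _)) fun ω => ?_
        have h := hΨ.le_add_mul (WS X n σ i ω) 0
        rw [Real.dist_0_eq_abs] at h
        linarith [le_abs_self (Ψ 0)]
    _ = |Ψ 0| + L * ∫ ω, |WS X n σ i ω| ∂P := by
        rw [integral_add (integrable_const _) (hW.abs.const_mul _), integral_const,
          integral_const_mul]
        simp
    _ ≤ _ := by gcongr; exact integral_abs_WS_le hX hσm hσC hXi

lemma exists_admissible_integral_maxStepMean_le (hX : ∀ i, Measurable (X i))
    (hindep : iIndepFun (fun i : Fin n => X i) P) (hid : IdentDistrib (X i) (X 0) P P)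
    (hi : i < n) (hXint : ∀ j < n, Integrable (X j) P) (hφ : LipschitzWith L φ)
    (hK : IsCompact K) {σ : ℕ → ℝ → ℝ} (hσ : σ ∈ admissibleControls K) {ε : ℝ} (hε : 0 < ε) :
    ∃ σ' ∈ admissibleControls K,
      ∫ ω, maxStepMean P (fun ω => X 0 ω / Real.sqrt n) φ K (WS X n σ i ω) ∂P ≤
        ∫ ω, φ (WS X n σ' (i + 1) ω) ∂P + ε := by
  obtain ⟨C, hC⟩ := exists_forall_mem_admissibleControls_abs_le hK.isBounded
  have hY := (hXint 0 (by omega)).div_const (Real.sqrt n)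
  have hK' : K.Nonempty := ⟨_, (hσ 0).2 0⟩
  obtain ⟨τ, hτm, hτ⟩ := exists_measurable_maxStepMean_sub_lt hY hφ hK hK' hε
  set σ' := Function.update σ i τ
  have hσ' : σ' ∈ admissibleControls K := fun j => by
    rcases eq_or_ne j i with rfl | hj
    · simpa [σ'] using ⟨hτm, fun s => (hτ s).1⟩
    · simpa [σ', hj] using hσ j
  have hW : WS X n σ' i = WS X n σ i :=
    WS_congr i fun j hj => Function.update_of_ne hj.ne _ _
  obtain ⟨hint, heq⟩ :=
    integral_comp_WS_succ hX hindep hid hi hXint hφ (fun j => (hσ' j).1) (hC σ' hσ')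
  simp only [hW, σ', Function.update_self] at hint heq
  refine ⟨σ', hσ', ?_⟩
  rw [heq]
  calc _ ≤ ∫ ω, (stepMean P (fun ω => X 0 ω / Real.sqrt n) φ (WS X n σ i ω)
          (τ (WS X n σ i ω)) + ε) ∂P := by
        refine integral_mono ((lipschitzWith_maxStepMean hY hφ hK hK').integrable_comp
          (integrable_WS hX (fun j => (hσ j).1) (hC σ hσ) fun j hj => hXint j (by omega)))
          (hint.add (integrable_const ε)) fun ω => ?_
        linarith [(hτ (WS X n σ i ω)).2]
    _ = _ := by rw [integral_add hint (integrable_const ε), integral_const]; simp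

end DynamicProgramming

theorem stmt15_general {Ω : Type*} [MeasurableSpace Ω] (P : Measure Ω) [IsProbabilityMeasure P]
    (X : ℕ → Ω → ℝ) (hmeas : ∀ i, Measurable (X i))
    (n : ℕ)
    (hindep : ProbabilityTheory.iIndepFun
      (fun i : Fin n => X i) P)
    (hid : ∀ i < n, ProbabilityTheory.IdentDistrib (X i) (X 0) P P)
    (hm2 : ∫ ω, (X 0 ω) ^ 2 ∂P = 1)
    (σlow σbar : ℝ) (hσ : σlow ≤ σbar)
    (φ : ℝ → ℝ) (L : NNReal) (hφ : LipschitzWith L φ)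
    (i : ℕ) (hi : i < n) :
    sSup ((fun σ : ℕ → ℝ → ℝ => ∫ ω, φ (WS X n σ (i + 1) ω) ∂P) ''
        {σ | ∀ j, Measurable (σ j) ∧ ∀ s, σ j s ∈ Set.Icc σlow σbar}) =
    sSup ((fun σ : ℕ → ℝ → ℝ => ∫ ω,
          sSup ((fun lam : ℝ =>
              ∫ ω', φ (WS X n σ i ω + lam * X 0 ω' / Real.sqrt n) ∂P) ''
            Set.Icc σlow σbar) ∂P) ''
        {σ | ∀ j, Measurable (σ j) ∧ ∀ s, σ j s ∈ Set.Icc σlow σbar}) := by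
  -- `∫ X₀² = 1 ≠ 0` forces `X₀²` to be integrable, so `X₀ ∈ L²`.
  have hX0 : Integrable (X 0) P :=
    ((memLp_two_iff_integrable_sq (hmeas 0).aestronglyMeasurable).2
      (Integrable.of_integral_ne_zero (by rw [hm2]; exact one_ne_zero))).integrable one_le_two
  have hXint : ∀ j < n, Integrable (X j) P := fun j hj => (hid j hj).integrable_iff.2 hX0
  simp only [mul_div_assoc]
  exact csSup_image_eq_of_le_of_forall_le_add (f := fun σ => ∫ ω, φ (WS X n σ (i + 1) ω) ∂P)
    ⟨fun _ _ => σlow, fun _ => ⟨measurable_const, fun _ => left_mem_Icc.2 hσ⟩⟩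
    (bddAbove_integral_maxStepMean_WS hmeas hi hXint hφ isCompact_Icc (nonempty_Icc.2 hσ))
    (fun σ hσ => integral_comp_WS_succ_le hmeas hindep (hid i hi) hi hXint hφ isCompact_Icc hσ)
    fun σ hσ ε hε => exists_admissible_integral_maxStepMean_le hmeas hindep (hid i hi) hi hXint
      hφ isCompact_Icc hσ hε

/-- Dynamic programming principle for the approximation of the `G`-normal distribution:
`sup_σ E[φ(W^σ_{i+1})] = sup_σ E[Ψ(W^σ_i)]` where `Ψ(s) = sup_{λ∈[σ_,σ̄]} E[φ(s + λX_1/√n)]`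
and the suprema are over all sequences of measurable functions `σ_i : ℝ → [σ_, σ̄]`. -/
theorem stmt15 {Ω : Type*} [MeasurableSpace Ω] (P : Measure Ω) [IsProbabilityMeasure P]
    (X : ℕ → Ω → ℝ) (hmeas : ∀ i, Measurable (X i))
    (n : ℕ) (hn : 1 ≤ n)
    (hindep : ProbabilityTheory.iIndepFun
      (fun i : Fin n => X i) P)
    (hid : ∀ i < n, ProbabilityTheory.IdentDistrib (X i) (X 0) P P)
    (hm1 : ∫ ω, X 0 ω ∂P = 0) (hm2 : ∫ ω, (X 0 ω) ^ 2 ∂P = 1)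
    (hm3 : Integrable (fun ω => |X 0 ω| ^ 3) P)
    (σlow σbar : ℝ) (h0 : 0 < σlow) (hσ : σlow ≤ σbar)
    (φ : ℝ → ℝ) (L : NNReal) (hφ : LipschitzWith L φ)
    (i : ℕ) (hi : i < n) :
    sSup ((fun σ : ℕ → ℝ → ℝ => ∫ ω, φ (WS X n σ (i + 1) ω) ∂P) ''
        {σ | ∀ j, Measurable (σ j) ∧ ∀ s, σ j s ∈ Set.Icc σlow σbar}) =
    sSup ((fun σ : ℕ → ℝ → ℝ => ∫ ω,
          sSup ((fun lam : ℝ =>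
              ∫ ω', φ (WS X n σ i ω + lam * X 0 ω' / Real.sqrt n) ∂P) ''
            Set.Icc σlow σbar) ∂P) ''
        {σ | ∀ j, Measurable (σ j) ∧ ∀ s, σ j s ∈ Set.Icc σlow σbar}) :=
  stmt15_general P X hmeas n hindep hid hm2 σlow σbar hσ φ L hφ i hi
end

section
/- Let 𝒫 ⊂ ℝ^d be a bounded convex polytope, let v be a vertex of 𝒫, and let T_v := {v + c(u − v) : u ∈ 𝒫, c ≥ 0} be the closed convex cone with apex v generated by 𝒫. Define φ : ℝ^d → ℝ by φ(x) := d_{T_v − v}(x)² = inf_{y ∈ T_v − v} |x − y|², where T_v − v := {w − v : w ∈ T_v}. Then: (i) φ is differentiable on all of ℝ^d; (ii) its gradient Dφ : ℝ^d → ℝ^d is Lipschitz with constant 2; and (iii) for every x ∈ ℝ^d, v · Dφ(x) = sup_{μ ∈ 𝒫} μ · Dφ(x). -/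
/-!
Translating the cone `T_v` by `-v` gives a pointed convex cone `C`, and `φ` is the squared
distance to the closed convex cone `closure C`. For any nonempty closed convex set `D` with
nearest-point map `P`, the squared distance to `D` is differentiable with gradient
`2 (x - P x)`, and `x ↦ x - P x` is firmly nonexpansive, hence `1`-Lipschitz. When `D` is a
cone, `P x + w ∈ D` for `w ∈ D`, so the variational inequality gives `⟪w, x - P x⟫ ≤ 0`;
taking `w = μ - v` yields the last claim.
-/

open RealInnerProductSpace Metric

section ConeAt

variable {𝕜 E : Type*} [Field 𝕜] [LinearOrder 𝕜] [IsStrictOrderedRing 𝕜]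
  [AddCommGroup E] [Module 𝕜 E]

def Convex.coneAt {K : Set E} (hK : Convex 𝕜 K) {v : E} (hv : v ∈ K) : PointedCone 𝕜 E where
  carrier := {w | ∃ u ∈ K, ∃ c : 𝕜, 0 ≤ c ∧ w = c • (u - v)}
  zero_mem' := ⟨v, hv, 0, le_rfl, by simp⟩
  smul_mem' := by
    rintro ⟨t, ht⟩ _ ⟨u, hu, c, hc, rfl⟩
    exact ⟨u, hu, t * c, mul_nonneg ht hc, by rw [mul_smul]; rfl⟩
  add_mem' := by
    rintro _ _ ⟨u₁, hu₁, c₁, hc₁, rfl⟩ ⟨u₂, hu₂, c₂, hc₂, rfl⟩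
    rcases (add_nonneg hc₁ hc₂).eq_or_lt with hs | hs
    · obtain rfl : c₁ = 0 := by linarith
      obtain rfl : c₂ = 0 := by linarith
      exact ⟨v, hv, 0, le_rfl, by simp⟩
    · -- `c₁ (u₁ - v) + c₂ (u₂ - v) = (c₁ + c₂) (u - v)` for the convex combination `u`
      refine ⟨(c₁ / (c₁ + c₂)) • u₁ + (c₂ / (c₁ + c₂)) • u₂,
        hK hu₁ hu₂ (div_nonneg hc₁ hs.le) (div_nonneg hc₂ hs.le) (by field_simp),
        c₁ + c₂, hs.le, ?_⟩
      match_scalars <;> field_simp; ring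

end ConeAt

section MetricProjection

variable {E : Type*} [NormedAddCommGroup E] [InnerProductSpace ℝ E]

/-- `P` is the nearest-point map onto `D`, in its variational form. -/
def IsMetricProjection (D : Set E) (P : E → E) : Prop :=
  ∀ x, P x ∈ D ∧ ∀ w ∈ D, ⟪x - P x, w - P x⟫ ≤ 0

theorem exists_isMetricProjection [CompleteSpace E] {D : Set E} (hne : D.Nonempty)
    (hcl : IsClosed D) (hconv : Convex ℝ D) : ∃ P, IsMetricProjection D P := by
  choose P hPD hPeq using exists_norm_eq_iInf_of_complete_convex hne hcl.isComplete hconv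
  exact ⟨P, fun x => ⟨hPD x, (norm_eq_iInf_iff_real_inner_le_zero hconv (hPD x)).1 (hPeq x)⟩⟩

namespace IsMetricProjection

variable {D : Set E} {P : E → E}

theorem infDist_eq (hP : IsMetricProjection D P) (x : E) : infDist x D = ‖x - P x‖ := by
  obtain ⟨hPx, hvar⟩ := hP x
  refine le_antisymm (dist_eq_norm x (P x) ▸ infDist_le_dist_of_mem hPx)
    ((le_infDist ⟨_, hPx⟩).2 fun w hw => ?_)
  have hsq : ‖x - w‖ ^ 2 = ‖x - P x‖ ^ 2 - 2 * ⟪x - P x, w - P x⟫ + ‖w - P x‖ ^ 2 := by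
    rw [← norm_sub_sq_real, sub_sub_sub_cancel_right]
  rw [dist_eq_norm]
  nlinarith [hvar w hw, norm_nonneg (x - w), norm_nonneg (x - P x), sq_nonneg ‖w - P x‖]

theorem abs_infDist_sq_sub_le (hP : IsMetricProjection D P) (x y : E) :
    |infDist y D ^ 2 - infDist x D ^ 2 - 2 * ⟪x - P x, y - x⟫| ≤ ‖y - x‖ ^ 2 := by
  obtain ⟨hPx, hvarx⟩ := hP x
  have hupper : infDist y D ^ 2 ≤ ‖y - P x‖ ^ 2 := by
    rw [← dist_eq_norm]
    exact pow_le_pow_left₀ infDist_nonneg (infDist_le_dist_of_mem hPx) 2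
  have hexpand : ‖y - P x‖ ^ 2 = ‖x - P x‖ ^ 2 + 2 * ⟪x - P x, y - x⟫ + ‖y - x‖ ^ 2 := by
    rw [← sub_add_sub_cancel y x (P x), add_comm (y - x), norm_add_sq_real]
  -- Lower bound: `‖b‖² ≥ 2⟪a, b⟫ - ‖a‖²` for `a = x - P x`, `b = y - P y`, and
  -- `⟪a, b⟫ ≥ ⟪a, y - x⟫ + ‖a‖²` by the variational inequality at `x` tested with `P y`.
  have hcross : ⟪x - P x, y - P y⟫ =
      ⟪x - P x, y - x⟫ + ‖x - P x‖ ^ 2 - ⟪x - P x, P y - P x⟫ := by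
    rw [show y - P y = (y - x) + (x - P x) - (P y - P x) by abel, inner_sub_right,
      inner_add_right, real_inner_self_eq_norm_sq]
  have hlower := norm_sub_sq_real (y - P y) (x - P x)
  rw [real_inner_comm] at hlower
  rw [hP.infDist_eq y] at hupper
  rw [hP.infDist_eq x, hP.infDist_eq y, abs_le]
  constructor <;> nlinarith [hvarx _ (hP y).1, sq_nonneg ‖y - P y - (x - P x)‖,
    sq_nonneg ‖y - x‖]

theorem hasGradientAt_infDist_sq [CompleteSpace E] (hP : IsMetricProjection D P) (x : E) :
    HasGradientAt (fun y => infDist y D ^ 2) ((2 : ℝ) • (x - P x)) x := by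
  rw [hasGradientAt_iff_isLittleO]
  refine (Asymptotics.IsBigO.of_bound' (Filter.Eventually.of_forall fun y => ?_)).trans_isLittleO
    (Asymptotics.isLittleO_pow_sub_sub x one_lt_two)
  rw [real_inner_smul_left, Real.norm_eq_abs, norm_pow, norm_norm]
  exact hP.abs_infDist_sq_sub_le x y

theorem norm_sub_sq_le_inner (hP : IsMetricProjection D P) (x y : E) :
    ‖(x - P x) - (y - P y)‖ ^ 2 ≤ ⟪(x - P x) - (y - P y), x - y⟫ := by
  have hx := (hP x).2 (P y) (hP y).1
  have hy := (hP y).2 (P x) (hP x).1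
  have hsplit : ⟪(x - P x) - (y - P y), x - y⟫ = ‖(x - P x) - (y - P y)‖ ^ 2
      - ⟪x - P x, P y - P x⟫ - ⟪y - P y, P x - P y⟫ := by
    rw [← real_inner_self_eq_norm_sq]
    simp only [inner_sub_left, inner_sub_right]
    ring
  linarith

theorem lipschitzWith_sub (hP : IsMetricProjection D P) : LipschitzWith 1 fun x => x - P x := by
  refine LipschitzWith.of_dist_le_mul fun x y => ?_
  rw [NNReal.coe_one, one_mul, dist_eq_norm, dist_eq_norm]
  have h := (hP.norm_sub_sq_le_inner x y).trans (real_inner_le_norm _ _)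
  nlinarith [norm_nonneg ((x - P x) - (y - P y)), norm_nonneg (x - y)]

theorem inner_le_zero_of_mem_cone {S : PointedCone ℝ E} (hP : IsMetricProjection S P)
    (x : E) {w : E} (hw : w ∈ S) : ⟪w, x - P x⟫ ≤ 0 := by
  have h := (hP x).2 (P x + w) (S.add_mem (hP x).1 hw)
  rwa [add_sub_cancel_left, real_inner_comm] at h

end IsMetricProjection

end MetricProjection

/-- Properties of the squared distance to the translated cone of a polytope at a vertex
(Lemma 5.1): with `T_v = {v + c(u − v) : u ∈ 𝒫, c ≥ 0}` and `φ(x) = d_{T_v − v}(x)²`,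
the function `φ` is differentiable, its gradient is Lipschitz with constant `2`, and
`v · Dφ(x) = sup_{μ∈𝒫} μ · Dφ(x)` for all `x`. -/
theorem stmt17 {d : ℕ} (V : Finset (EuclideanSpace ℝ (Fin d)))
    (K : Set (EuclideanSpace ℝ (Fin d)))
    (hK : K = convexHull ℝ (V : Set (EuclideanSpace ℝ (Fin d))))
    (v : EuclideanSpace ℝ (Fin d)) (hv : v ∈ Set.extremePoints ℝ K) :
    let Tv : Set (EuclideanSpace ℝ (Fin d)) :=
      {w | ∃ u ∈ K, ∃ c : ℝ, 0 ≤ c ∧ w = v + c • (u - v)}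
    let φ : EuclideanSpace ℝ (Fin d) → ℝ :=
      fun x => (Metric.infDist x ((fun w => w - v) '' Tv)) ^ 2
    Differentiable ℝ φ ∧
    LipschitzWith 2 (gradient φ) ∧
    ∀ x, ∀ μ ∈ K, ⟪μ, gradient φ x⟫ ≤ ⟪v, gradient φ x⟫ := by
  intro Tv φ
  have hKconv : Convex ℝ K := hK ▸ convex_convexHull ℝ _
  set C := hKconv.coneAt hv.1
  have hTv : (fun w => w - v) '' Tv = C := by
    ext w
    simp only [Set.mem_image, SetLike.mem_coe, Tv, Set.mem_ofPred_eq]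
    constructor
    · rintro ⟨_, ⟨u, hu, c, hc, rfl⟩, rfl⟩
      exact ⟨u, hu, c, hc, add_sub_cancel_left v _⟩
    · rintro ⟨u, hu, c, hc, rfl⟩
      exact ⟨_, ⟨u, hu, c, hc, rfl⟩, add_sub_cancel_left v _⟩
  have hφ : φ = fun x => infDist x (C.closure : Set _) ^ 2 := by
    simp only [φ, hTv, PointedCone.coe_closure, infDist_closure]
  obtain ⟨P, hP⟩ := exists_isMetricProjection ⟨0, C.closure.zero_mem⟩ isClosed_closure
    C.closure.convex
  have hgrad : ∀ x, HasGradientAt φ ((2 : ℝ) • (x - P x)) x :=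
    hφ ▸ hP.hasGradientAt_infDist_sq
  have hgradφ : gradient φ = fun x => (2 : ℝ) • (x - P x) := funext fun x => (hgrad x).gradient
  refine ⟨fun x => (hgrad x).differentiableAt, ?_, fun x μ hμ => ?_⟩
  · rw [hgradφ]
    exact ((lipschitzWith_smul (2 : ℝ)).comp hP.lipschitzWith_sub).weaken (by simp)
  · have hμv : μ - v ∈ C.closure := subset_closure ⟨μ, hμ, 1, zero_le_one, (one_smul ℝ _).symm⟩
    have h := hP.inner_le_zero_of_mem_cone x hμv
    rw [hgradφ, real_inner_smul_right, real_inner_smul_right]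
    rw [inner_sub_left] at h
    linarith
end
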